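/- arXiv:2206.13877 — 7 statements merged into one kernel-verified Lean document; each statement's English description precedes it below -/
import Mathlib

section
/- In any involution π on {1,…,n}, the set of values of right-to-left maxima equals the set of positions of right-to-left maxima. -/
/-- A permutation is an involution if it equals its inverse. -/
def IsInvolution {n : ℕ} (π : Equiv.Perm (Fin n)) : Prop :=
  ∀ i, π (π i) = i

/-- `π` is alternating: `π i < π (i+1)` iff `i` is odd (1-based positions). -/
def IsAlternating {n : ℕ} (π : Equiv.Perm (Fin n)) : Prop :=
  ∀ (i : Fin n) (h : (i : ℕ) + 1 < n), (π i < π ⟨(i : ℕ) + 1, h⟩ ↔ Odd ((i : ℕ) + 1))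

/-- `π` is reverse alternating: `π i > π (i+1)` iff `i` is odd (1-based positions). -/
def IsRevAlternating {n : ℕ} (π : Equiv.Perm (Fin n)) : Prop :=
  ∀ (i : Fin n) (h : (i : ℕ) + 1 < n), (π ⟨(i : ℕ) + 1, h⟩ < π i ↔ Odd ((i : ℕ) + 1))

/-- `σ` contains the pattern `τ`. -/
def Contains {n k : ℕ} (σ : Equiv.Perm (Fin n)) (τ : Equiv.Perm (Fin k)) : Prop :=
  ∃ f : Fin k → Fin n, StrictMono f ∧ ∀ a b : Fin k, σ (f a) < σ (f b) ↔ τ a < τ b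

/-- `σ` avoids the pattern `τ`. -/
def Avoids {n k : ℕ} (σ : Equiv.Perm (Fin n)) (τ : Equiv.Perm (Fin k)) : Prop :=
  ¬ Contains σ τ


lemma key_rtl {n : ℕ} (π : Equiv.Perm (Fin n)) (hinv : IsInvolution π) (i : Fin n)
    (h : ∀ j : Fin n, i < j → π j < π i) :
    ∀ j : Fin n, π i < j → π j < π (π i) := by
  intro j hj
  rw [hinv]
  by_contra hle
  push_neg at hle
  rcases eq_or_lt_of_le hle with heq | hlt
  · exact absurd (heq ▸ hinv j : π i = j) (ne_of_lt hj)
  · exact absurd ((hinv j) ▸ h (π j) hlt) (not_lt_of_gt hj)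

/-- In an involution, the set of values of right-to-left maxima equals the set
of positions of right-to-left maxima. -/
theorem rtl_maxima_values_eq_positions {n : ℕ} (π : Equiv.Perm (Fin n))
    (hinv : IsInvolution π) :
    {v : Fin n | ∃ i : Fin n, (∀ j : Fin n, i < j → π j < π i) ∧ π i = v} =
    {i : Fin n | ∀ j : Fin n, i < j → π j < π i} := by
  ext v
  simp only [Set.mem_setOf_eq]
  constructor
  · rintro ⟨i, hi, rfl⟩
    exact key_rtl π hinv i hi
  · intro hv
    exact ⟨π v, key_rtl π hinv v hv, hinv v⟩
end

section
/- For every n ≥ 1, there is exactly one alternating involution of length n avoiding the pattern 123. -/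
def p123 : Equiv.Perm (Fin 3) := ⟨![0,1,2], ![0,1,2], by decide, by decide⟩
def p132 : Equiv.Perm (Fin 3) := ⟨![0,2,1], ![0,2,1], by decide, by decide⟩
def p321 : Equiv.Perm (Fin 3) := ⟨![2,1,0], ![2,1,0], by decide, by decide⟩
def p1234 : Equiv.Perm (Fin 4) := ⟨![0,1,2,3], ![0,1,2,3], by decide, by decide⟩
def p4321 : Equiv.Perm (Fin 4) := ⟨![3,2,1,0], ![3,2,1,0], by decide, by decide⟩
def p3412 : Equiv.Perm (Fin 4) := ⟨![2,3,0,1], ![2,3,0,1], by decide, by decide⟩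
def p3421 : Equiv.Perm (Fin 4) := ⟨![2,3,1,0], ![3,2,0,1], by decide, by decide⟩
def p4312 : Equiv.Perm (Fin 4) := ⟨![3,2,0,1], ![2,3,1,0], by decide, by decide⟩
def p2431 : Equiv.Perm (Fin 4) := ⟨![1,3,2,0], ![3,0,2,1], by decide, by decide⟩
def p4132 : Equiv.Perm (Fin 4) := ⟨![3,0,2,1], ![1,3,2,0], by decide, by decide⟩


/-- the unique alternating 123-avoiding involution, as a function on ℕ. -/
def gval (n i : ℕ) : ℕ :=
  if n % 2 = 0 then (if i % 2 = 0 then n - 2 - i else n - i)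
  else if i = n - 1 then (if n = 1 then 0 else 1)
  else if i = 1 then n - 1
  else if i % 2 = 0 then n - 3 - i
  else n + 1 - i

lemma gval_lt {n i : ℕ} (h : i < n) : gval n i < n := by
  unfold gval
  rcases Nat.even_or_odd n with hn | hn <;> rcases Nat.even_or_odd i with hi | hi <;>
    simp [Nat.even_iff, Nat.odd_iff] at hn hi <;>
    split_ifs <;> omega

lemma gval_invol {n i : ℕ} (h : i < n) : gval n (gval n i) = i := by
  unfold gval
  rcases Nat.even_or_odd n with hn | hn <;> rcases Nat.even_or_odd i with hi | hi <;>
    simp [Nat.even_iff, Nat.odd_iff] at hn hi <;>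
    split_ifs <;> omega

lemma gval_alt {n i : ℕ} (h : i + 1 < n) :
    (gval n i < gval n (i+1) ↔ i % 2 = 0) := by
  unfold gval
  rcases Nat.even_or_odd n with hn | hn <;> rcases Nat.even_or_odd i with hi | hi <;>
    simp [Nat.even_iff, Nat.odd_iff] at hn hi <;>
    split_ifs <;> omega

/-- the "class" of a position: positions of the same class have decreasing values. -/
def gcls (n i : ℕ) : Bool :=
  if n % 2 = 0 then decide (i % 2 = 1) else decide (i % 2 = 1 ∨ i = n - 1)

lemma gval_dec {n i j : ℕ} (hij : i < j) (hj : j < n) (hc : gcls n i = gcls n j) :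
    gval n j < gval n i := by
  unfold gval gcls at *
  rcases Nat.even_or_odd n with hn | hn <;> rcases Nat.even_or_odd i with hi | hi <;>
    rcases Nat.even_or_odd j with hj2 | hj2 <;>
    simp [Nat.even_iff, Nat.odd_iff] at hn hi hj2 <;>
    simp [hn, hi, hj2] at hc ⊢ <;> first | omega | (split_ifs <;> omega)

/-- The candidate permutation. -/
def gperm (n : ℕ) : Equiv.Perm (Fin n) :=
  ⟨fun i => ⟨gval n i.1, gval_lt i.2⟩, fun i => ⟨gval n i.1, gval_lt i.2⟩,
   fun i => Fin.ext (gval_invol i.2), fun i => Fin.ext (gval_invol i.2)⟩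

lemma gperm_apply {n : ℕ} (i : Fin n) : ((gperm n) i : ℕ) = gval n i.1 := rfl

lemma gperm_invol (n : ℕ) : IsInvolution (gperm n) := by
  intro i; exact Fin.ext (gval_invol i.2)

lemma gperm_alt (n : ℕ) : IsAlternating (gperm n) := by
  intro i h
  rw [Fin.lt_def, gperm_apply, gperm_apply, gval_alt h]
  rw [Nat.odd_iff]; omega

lemma p123_lt_iff : ∀ a b : Fin 3, p123 a < p123 b ↔ a < b := by decide

lemma gperm_avoids (n : ℕ) : Avoids (gperm n) p123 := by
  rintro ⟨f, hmono, hiff⟩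
  have h01 : gval n (f 0).1 < gval n (f 1).1 := by
    have := (hiff 0 1).2 (by rw [p123_lt_iff]; decide)
    rwa [Fin.lt_def, gperm_apply, gperm_apply] at this
  have h12 : gval n (f 1).1 < gval n (f 2).1 := by
    have := (hiff 1 2).2 (by rw [p123_lt_iff]; decide)
    rwa [Fin.lt_def, gperm_apply, gperm_apply] at this
  have m01 : (f 0).1 < (f 1).1 := hmono (by decide)
  have m12 : (f 1).1 < (f 2).1 := hmono (by decide)
  -- two of the three positions lie in the same class
  by_cases c1 : gcls n (f 0).1 = gcls n (f 1).1
  · exact absurd (gval_dec m01 (f 1).2 c1) (by omega)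
  · by_cases c2 : gcls n (f 1).1 = gcls n (f 2).1
    · exact absurd (gval_dec m12 (f 2).2 c2) (by omega)
    · have c3 : gcls n (f 0).1 = gcls n (f 2).1 := by
        revert c1 c2
        cases gcls n (f 0).1 <;> cases gcls n (f 1).1 <;> cases gcls n (f 2).1 <;> simp
      exact absurd (gval_dec (m01.trans m12) (f 2).2 c3) (by omega)

section Uniqueness
variable {n : ℕ} (π : Equiv.Perm (Fin n))

/-- value of π at position i, as a ℕ-function -/
def Fv (π : Equiv.Perm (Fin n)) (i : ℕ) : ℕ := if h : i < n then (π ⟨i, h⟩ : ℕ) else 0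

variable (hI : IsInvolution π) (hA : IsAlternating π) (hAv : Avoids π p123)

lemma Fv_lt {i : ℕ} (h : i < n) : Fv π i < n := by
  simp only [Fv, dif_pos h]; exact (π ⟨i, h⟩).2

include hI in
lemma Fv_invol {i : ℕ} (h : i < n) : Fv π (Fv π i) = i := by
  have h2 : (π ⟨i, h⟩ : ℕ) < n := (π ⟨i, h⟩).2
  simp only [Fv, dif_pos h, dif_pos h2]
  have he : (⟨(π ⟨i, h⟩ : ℕ), h2⟩ : Fin n) = π ⟨i, h⟩ := rfl
  rw [he, hI ⟨i, h⟩]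

include hI in
lemma Fv_inj {i j : ℕ} (hi : i < n) (hj : j < n) (h : Fv π i = Fv π j) : i = j := by
  have := Fv_invol π hI hi
  rw [h, Fv_invol π hI hj] at this
  omega

include hA in
lemma Fv_asc {i : ℕ} (hi : i % 2 = 0) (h : i + 1 < n) : Fv π i < Fv π (i + 1) := by
  have h0 : i < n := by omega
  have := hA ⟨i, h0⟩ h
  simp only [Fin.val_mk] at this
  simp only [Fv, dif_pos h0, dif_pos h]
  rw [Fin.lt_def] at this
  exact this.2 (by rw [Nat.odd_iff]; omega)

include hA in
lemma Fv_desc {i : ℕ} (hi : i % 2 = 1) (h : i + 1 < n) : Fv π (i + 1) < Fv π i := by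
  have h0 : i < n := by omega
  have := hA ⟨i, h0⟩ h
  simp only [Fin.val_mk] at this
  rw [Fin.lt_def] at this
  have hne : π ⟨i, h0⟩ ≠ π ⟨i+1, h⟩ := by
    intro he
    have := π.injective he
    simp only [Fin.mk.injEq] at this
    omega
  have h1 : ¬ ((π ⟨i, h0⟩ : ℕ) < (π ⟨i+1, h⟩ : ℕ)) := by
    intro hlt
    have := this.1 hlt
    rw [Nat.odd_iff] at this; omega
  have h2 : (π ⟨i, h0⟩ : ℕ) ≠ (π ⟨i+1, h⟩ : ℕ) := fun he => hne (Fin.ext he)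
  simp only [Fv, dif_pos h0, dif_pos h]
  omega

include hAv in
lemma Fv_no123 {i j k : ℕ} (hij : i < j) (hjk : j < k) (hk : k < n)
    (h1 : Fv π i < Fv π j) (h2 : Fv π j < Fv π k) : False := by
  have hi : i < n := by omega
  have hj : j < n := by omega
  simp only [Fv, dif_pos hi, dif_pos hj, dif_pos hk] at h1 h2
  apply hAv
  have hmono : StrictMono ![(⟨i, hi⟩ : Fin n), ⟨j, hj⟩, ⟨k, hk⟩] := by
    rw [Fin.strictMono_iff_lt_succ]
    intro a
    fin_cases a
    · exact Fin.mk_lt_mk.2 hij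
    · exact Fin.mk_lt_mk.2 hjk
  have hmono2 : StrictMono (fun a => π (![(⟨i, hi⟩ : Fin n), ⟨j, hj⟩, ⟨k, hk⟩] a)) := by
    rw [Fin.strictMono_iff_lt_succ]
    intro a
    fin_cases a
    · exact h1
    · exact h2
  exact ⟨_, hmono, fun a b => by rw [p123_lt_iff]; exact hmono2.lt_iff_lt⟩

include hI hA hAv in
lemma Fv_peaks_dec {i j : ℕ} (hi : i % 2 = 1) (hj : j % 2 = 1) (hij : i < j) (hjn : j < n) :
    Fv π j < Fv π i := by
  have h0 : i - 1 + 1 = i := by omega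
  have hasc : Fv π (i-1) < Fv π i := by
    have := Fv_asc π hA (i := i - 1) (by omega) (by omega)
    rwa [h0] at this
  rcases Nat.lt_trichotomy (Fv π i) (Fv π j) with h | h | h
  · exact absurd (Fv_no123 π hAv (i := i-1) (by omega) hij hjn hasc h) (fun x => x)
  · exact absurd (Fv_inj π hI (by omega) hjn h) (by omega)
  · exact h

include hI hA hAv in
lemma Fv_valleys_dec {i j : ℕ} (hi : i % 2 = 0) (hj : j % 2 = 0) (hij : i < j) (hjn : j + 1 < n) :
    Fv π j < Fv π i := by
  have hasc : Fv π j < Fv π (j+1) := Fv_asc π hA hj hjn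
  rcases Nat.lt_trichotomy (Fv π i) (Fv π j) with h | h | h
  · exact absurd (Fv_no123 π hAv hij (by omega) hjn h hasc) (fun x => x)
  · exact absurd (Fv_inj π hI (by omega) (by omega) h) (by omega)
  · exact h

include hI hA hAv in
lemma Fv_even_main (hn2 : n % 2 = 0) :
    ∀ k, 2*k+2 ≤ n → Fv π (2*k+1) = n-1-2*k ∧ Fv π (2*k) = n-2-2*k := by
  intro k
  induction k using Nat.strong_induction_on with
  | _ k IH =>
  intro hk
  have M : ∀ j, j < k → Fv π (2*j+1) = n-1-2*j ∧ Fv π (2*j) = n-2-2*j ∧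
      Fv π (n-1-2*j) = 2*j+1 ∧ Fv π (n-2-2*j) = 2*j := by
    intro j hj
    obtain ⟨h1, h2⟩ := IH j hj (by omega)
    refine ⟨h1, h2, ?_, ?_⟩
    · have := Fv_invol π hI (i := 2*j+1) (by omega); rw [h1] at this; exact this
    · have := Fv_invol π hI (i := 2*j) (by omega); rw [h2] at this; exact this
  by_cases hcr : n ≤ 4*k
  · -- crossed regime: follows from mirror of earlier stages
    obtain ⟨h1, h2, h3, h4⟩ := M ((n - 2 - 2*k)/2) (by omega)
    have e1 : n-1-2*((n - 2 - 2*k)/2) = 2*k+1 := by omega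
    have e2 : n-2-2*((n - 2 - 2*k)/2) = 2*k := by omega
    rw [e1] at h3; rw [e2] at h4
    rw [h3, h4]
    omega
  · push_neg at hcr
    have hun : 4*k+2 ≤ n := by omega
    -- the middle block of positions is mapped to itself
    have B : ∀ x, 2*k ≤ x → x ≤ n-1-2*k → 2*k ≤ Fv π x ∧ Fv π x ≤ n-1-2*k := by
      intro x hx1 hx2
      have hxn : x < n := by omega
      have hFw : Fv π (Fv π x) = x := Fv_invol π hI hxn
      have hwn : Fv π x < n := Fv_lt π hxn
      set w := Fv π x with hwdef
      by_contra hc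
      have hcase : w < 2*k ∨ n-1-2*k < w := by omega
      rcases hcase with hcase | hcase
      · by_cases hw : w % 2 = 0
        · obtain ⟨_, h2, _, _⟩ := M (w/2) (by omega)
          have hw2 : w = 2*(w/2) := by omega
          rw [← hw2] at h2
          omega
        · obtain ⟨h1, _, _, _⟩ := M (w/2) (by omega)
          have hw2 : w = 2*(w/2)+1 := by omega
          rw [← hw2] at h1
          omega
      · by_cases hw : w % 2 = 0
        · obtain ⟨_, _, _, h4⟩ := M ((n-2-w)/2) (by omega)
          have e : n-2-2*((n-2-w)/2) = w := by omega
          rw [e] at h4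
          omega
        · obtain ⟨_, _, h3, _⟩ := M ((n-1-w)/2) (by omega)
          have e : n-1-2*((n-1-w)/2) = w := by omega
          rw [e] at h3
          omega
    -- place the value n-1-2k at position 2k+1
    have hvn : n-1-2*k < n := by omega
    set p := Fv π (n-1-2*k) with hpdef
    have hp : Fv π p = n-1-2*k := Fv_invol π hI hvn
    have hpU : 2*k ≤ p ∧ p ≤ n-1-2*k := B (n-1-2*k) (by omega) (le_refl _)
    have hpeak : p = 2*k+1 := by
      by_contra hne
      by_cases hpp : p % 2 = 0
      · have hp1 : p + 1 < n := by omega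
        have ha := Fv_asc π hA hpp hp1
        have hB2 := B (p+1) (by omega) (by omega)
        omega
      · have hpd := Fv_peaks_dec π hI hA hAv (i := 2*k+1) (j := p) (by omega) (by omega)
          (by omega) (by omega)
        have hB2 := B (2*k+1) (by omega) (by omega)
        omega
    have hpk : Fv π (2*k+1) = n-1-2*k := by rw [← hpeak]; exact hp
    have hmir : Fv π (n-1-2*k) = 2*k+1 := by rw [← hpdef]; exact hpeak
    -- place the value n-2-2k at position 2k
    have hv'n : n-2-2*k < n := by omega
    set q := Fv π (n-2-2*k) with hqdef
    have hq : Fv π q = n-2-2*k := Fv_invol π hI hv'n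
    have hqU : 2*k ≤ q ∧ q ≤ n-1-2*k := B (n-2-2*k) (by omega) (by omega)
    have hqne : q ≠ 2*k+1 := by intro he; rw [he] at hq; omega
    have hval : q = 2*k := by
      by_contra hne
      by_cases hqq : q % 2 = 0
      · have hvd := Fv_valleys_dec π hI hA hAv (i := 2*k) (j := q) (by omega) hqq
          (by omega) (by omega)
        have hB0 := B (2*k) (by omega) (by omega)
        have hne2 : Fv π (2*k) ≠ n-1-2*k := by
          intro he
          have h5 := Fv_invol π hI (i := 2*k) (by omega)
          rw [he, hmir] at h5; omega
        omega
      · have hge : 2*k+3 ≤ q := by omega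
        have hasc := Fv_asc π hA (i := n-2-2*k) (by omega) (by omega)
        have he : n-2-2*k+1 = n-1-2*k := by omega
        rw [he, hmir] at hasc
        omega
    rw [hval] at hq
    exact ⟨hpk, hq⟩

include hI hA hAv in
lemma Fv_odd_base (hn2 : n % 2 = 1) (hn3 : 3 ≤ n) : Fv π 1 = n-1 ∧ Fv π (n-1) = 1 := by
  have hvn : n-1 < n := by omega
  set p := Fv π (n-1) with hpdef
  have hp : Fv π p = n-1 := Fv_invol π hI hvn
  have hpn : p < n := Fv_lt π hvn
  have hp1 : p = 1 := by
    by_contra hne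
    by_cases hpp : p % 2 = 0
    · by_cases hlast : p = n-1
      · have hd := Fv_desc π hA (i := n-2) (by omega) (by omega)
        have he : n-2+1 = n-1 := by omega
        rw [he] at hd
        have hlt := Fv_lt π (i := n-2) (by omega)
        rw [hlast] at hp
        omega
      · have ha := Fv_asc π hA hpp (by omega)
        have hlt := Fv_lt π (i := p+1) (by omega)
        omega
    · have hpd := Fv_peaks_dec π hI hA hAv (i := 1) (j := p) (by omega) (by omega)
        (by omega) hpn
      have hlt := Fv_lt π (i := 1) (by omega)
      omega
  constructor
  · rw [hp1] at hp; exact hp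
  · exact hp1

include hI hA hAv in
lemma Fv_odd_main (hn2 : n % 2 = 1) (hn3 : 3 ≤ n) :
    ∀ k, (2*k+3 ≤ n → Fv π (2*k) = n-3-2*k) ∧ (2*k+5 ≤ n → Fv π (2*k+3) = n-2-2*k) := by
  intro k
  induction k using Nat.strong_induction_on with
  | _ k IH =>
  obtain ⟨hb1, hb2⟩ := Fv_odd_base π hI hA hAv hn2 hn3
  have M : ∀ j, j < k → ((2*j+3 ≤ n → Fv π (2*j) = n-3-2*j ∧ Fv π (n-3-2*j) = 2*j) ∧
      (2*j+5 ≤ n → Fv π (2*j+3) = n-2-2*j ∧ Fv π (n-2-2*j) = 2*j+3)) := by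
    intro j hj
    obtain ⟨h1, h2⟩ := IH j hj
    constructor
    · intro hg
      have e1 := h1 hg
      refine ⟨e1, ?_⟩
      have := Fv_invol π hI (i := 2*j) (by omega); rw [e1] at this; exact this
    · intro hg
      have e2 := h2 hg
      refine ⟨e2, ?_⟩
      have := Fv_invol π hI (i := 2*j+3) (by omega); rw [e2] at this; exact this
  have B : 4*k+3 ≤ n → ∀ x, x < n → (x = 2*k ∨ (2*k+2 ≤ x ∧ x ≤ n-2-2*k)) →
      (Fv π x = 2*k ∨ (2*k+2 ≤ Fv π x ∧ Fv π x ≤ n-2-2*k)) := by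
    intro hreg x hxn hx
    have hFw : Fv π (Fv π x) = x := Fv_invol π hI hxn
    have hwn : Fv π x < n := Fv_lt π hxn
    set w := Fv π x with hwdef
    by_contra hc
    by_cases hw9 : w = n-1
    · rw [hw9, hb2] at hFw; omega
    by_cases hw1 : w = 1
    · rw [hw1, hb1] at hFw; omega
    by_cases hw : w % 2 = 0
    · by_cases hlo : w < 2*k
      · obtain ⟨hM, _⟩ := M (w/2) (by omega)
        obtain ⟨hM1, _⟩ := hM (by omega)
        have e : w = 2*(w/2) := by omega
        rw [← e] at hM1
        omega
      · obtain ⟨hM, _⟩ := M ((n-3-w)/2) (by omega)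
        obtain ⟨_, hM2⟩ := hM (by omega)
        have e : n-3-2*((n-3-w)/2) = w := by omega
        rw [e] at hM2
        omega
    · by_cases hlo : w ≤ 2*k+1
      · obtain ⟨_, hM⟩ := M ((w-3)/2) (by omega)
        obtain ⟨hM1, _⟩ := hM (by omega)
        have e : 2*((w-3)/2)+3 = w := by omega
        rw [e] at hM1
        omega
      · obtain ⟨_, hM⟩ := M ((n-2-w)/2) (by omega)
        obtain ⟨_, hM2⟩ := hM (by omega)
        have e : n-2-2*((n-2-w)/2) = w := by omega
        rw [e] at hM2
        omega
  have hpeak : 2*k+5 ≤ n → Fv π (2*k+3) = n-2-2*k ∧ Fv π (n-2-2*k) = 2*k+3 := by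
    intro hg
    by_cases hreg : n ≤ 4*k+4
    · obtain ⟨_, hM⟩ := M ((n-5-2*k)/2) (by omega)
      obtain ⟨hM1, hM2⟩ := hM (by omega)
      have e1 : 2*((n-5-2*k)/2)+3 = n-2-2*k := by omega
      have e2 : n-2-2*((n-5-2*k)/2) = 2*k+3 := by omega
      rw [e1, e2] at hM1
      rw [e2, e1] at hM2
      exact ⟨hM2, hM1⟩
    · push_neg at hreg
      have hB := B (by omega)
      have hvn : n-2-2*k < n := by omega
      set p := Fv π (n-2-2*k) with hpdef
      have hp : Fv π p = n-2-2*k := Fv_invol π hI hvn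
      have hpU := hB (n-2-2*k) hvn (by omega)
      have hpk : p = 2*k+3 := by
        by_contra hne
        by_cases hpp : p % 2 = 0
        · by_cases hp2k : p = 2*k
          · have hasc := Fv_asc π hA (i := n-3-2*k) (by omega) (by omega)
            have e : n-3-2*k+1 = n-2-2*k := by omega
            rw [e] at hasc
            have hU2 := hB (n-3-2*k) (by omega) (by omega)
            omega
          · have ha := Fv_asc π hA hpp (by omega)
            have hU2 := hB (p+1) (by omega) (by omega)
            omega
        · have hpd := Fv_peaks_dec π hI hA hAv (i := 2*k+3) (j := p) (by omega) (by omega)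
            (by omega) (by omega)
          have hU2 := hB (2*k+3) (by omega) (by omega)
          omega
      constructor
      · rw [hpk] at hp; exact hp
      · exact hpk
  have hvalley : 2*k+3 ≤ n → Fv π (2*k) = n-3-2*k := by
    intro hg
    by_cases hreg : n ≤ 4*k+1
    · obtain ⟨hM, _⟩ := M ((n-3-2*k)/2) (by omega)
      obtain ⟨hM1, hM2⟩ := hM (by omega)
      have e2 : n-3-2*((n-3-2*k)/2) = 2*k := by omega
      have e1 : 2*((n-3-2*k)/2) = n-3-2*k := by omega
      rw [e2, e1] at hM2
      exact hM2
    · push_neg at hreg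
      have hB := B (by omega)
      have hvn : n-3-2*k < n := by omega
      set q := Fv π (n-3-2*k) with hqdef
      have hq : Fv π q = n-3-2*k := Fv_invol π hI hvn
      have hqU := hB (n-3-2*k) hvn (by omega)
      have hqk : q = 2*k := by
        by_cases hcc : n = 4*k+3
        · omega
        · obtain ⟨hpk1, hpk2⟩ := hpeak (by omega)
          by_contra hne
          by_cases hqq : q % 2 = 0
          · have hvd := Fv_valleys_dec π hI hA hAv (i := 2*k) (j := q) (by omega) hqq
              (by omega) (by omega)
            have hU0 := hB (2*k) (by omega) (by omega)
            have hx : Fv π (2*k) = n-2-2*k := by omega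
            have h5 := Fv_invol π hI (i := 2*k) (by omega)
            rw [hx, hpk2] at h5
            omega
          · have hq5 : 2*k+5 ≤ q := by
              by_contra h5
              have he : q = 2*k+3 := by omega
              rw [he] at hq
              omega
            have hasc := Fv_asc π hA (i := n-3-2*k) (by omega) (by omega)
            have e : n-3-2*k+1 = n-2-2*k := by omega
            rw [e, hpk2] at hasc
            omega
      rw [hqk] at hq; exact hq
  exact ⟨hvalley, fun hg => (hpeak hg).1⟩

include hI hA hAv in
lemma Fv_eq_gval {i : ℕ} (h : i < n) : Fv π i = gval n i := by
  by_cases hn2 : n % 2 = 0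
  · by_cases hi : i % 2 = 0
    · obtain ⟨_, h2⟩ := Fv_even_main π hI hA hAv hn2 (i/2) (by omega)
      have e : 2*(i/2) = i := by omega
      rw [e] at h2
      unfold gval; split_ifs <;> omega
    · obtain ⟨h1, _⟩ := Fv_even_main π hI hA hAv hn2 ((i-1)/2) (by omega)
      have e : 2*((i-1)/2)+1 = i := by omega
      rw [e] at h1
      unfold gval; split_ifs <;> omega
  · by_cases hn1 : n = 1
    · subst hn1
      have hi0 : i = 0 := by omega
      subst hi0
      have := Fv_lt π h
      unfold gval; split_ifs <;> omega
    · have hn3 : 3 ≤ n := by omega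
      obtain ⟨hb1, hb2⟩ := Fv_odd_base π hI hA hAv (by omega) hn3
      by_cases hi : i % 2 = 0
      · by_cases hlast : i = n-1
        · rw [hlast, hb2]
          unfold gval; split_ifs <;> omega
        · obtain ⟨h1, _⟩ := Fv_odd_main π hI hA hAv (by omega) hn3 (i/2)
          have h1' := h1 (by omega)
          have e : 2*(i/2) = i := by omega
          rw [e] at h1'
          unfold gval; split_ifs <;> omega
      · by_cases hone : i = 1
        · rw [hone, hb1]
          unfold gval; split_ifs <;> omega
        · obtain ⟨_, h2⟩ := Fv_odd_main π hI hA hAv (by omega) hn3 ((i-3)/2)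
          have h2' := h2 (by omega)
          have e : 2*((i-3)/2)+3 = i := by omega
          rw [e] at h2'
          unfold gval; split_ifs <;> omega

end Uniqueness

/-- For every n ≥ 1, there is exactly one alternating involution of length n
avoiding the pattern 123. -/
theorem card_AI_avoiding_123 (n : ℕ) (hn : 1 ≤ n) :
    Nat.card {π : Equiv.Perm (Fin n) //
      IsInvolution π ∧ IsAlternating π ∧ Avoids π p123} = 1 := by
  rw [Nat.card_eq_one_iff_unique]
  constructor
  · constructor
    intro a b
    obtain ⟨πa, hIa, hAa, hVa⟩ := a
    obtain ⟨πb, hIb, hAb, hVb⟩ := b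
    apply Subtype.ext
    apply Equiv.ext
    intro i
    apply Fin.ext
    have ha := Fv_eq_gval πa hIa hAa hVa i.2
    have hb := Fv_eq_gval πb hIb hAb hVb i.2
    simp only [Fv, dif_pos i.2, Fin.eta] at ha hb
    rw [ha, hb]
  · exact ⟨⟨gperm n, gperm_invol n, gperm_alt n, gperm_avoids n⟩⟩
end

section
/- For every n, the number of alternating involutions of length n avoiding the pattern 132 is 1 if n is even or n = 1, and 0 otherwise. -/
def tv (n i : ℕ) : ℕ := if Even i then n-2-i else n-i

lemma tv_lt {n i : ℕ} (hi : i < n) : tv n i < n := by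
  unfold tv; split_ifs with h <;> simp [Nat.even_iff] at h ⊢ <;> omega

lemma tv_tv {n i : ℕ} (hn : Even n) (hi : i < n) : tv n (tv n i) = i := by
  rw [Nat.even_iff] at hn
  unfold tv
  split_ifs with h1 h2 h2 <;>
    simp only [Nat.even_iff, Nat.not_even_iff] at h1 h2 <;> omega

lemma targetF_inv {n : ℕ} (hn : Even n) :
    Function.Involutive (fun i : Fin n => (⟨tv n i, tv_lt i.isLt⟩ : Fin n)) :=
  fun i => Fin.ext (tv_tv hn i.isLt)

def targetPerm (n : ℕ) (hn : Even n) : Equiv.Perm (Fin n) :=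
  (targetF_inv hn).toPerm

lemma targetPerm_apply {n : ℕ} (hn : Even n) (i : Fin n) :
    ((targetPerm n hn i : Fin n) : ℕ) = tv n i := rfl

lemma targetPerm_step {n : ℕ} (hn : Even n) (a b : Fin n) (hab : a < b)
    (h : targetPerm n hn a < targetPerm n hn b) : (b : ℕ) = a + 1 := by
  rw [Fin.lt_def] at hab h
  rw [targetPerm_apply, targetPerm_apply] at h
  rw [Nat.even_iff] at hn
  unfold tv at h
  have hb := b.isLt
  split_ifs at h with h1 h2 h2 <;>
    simp only [Nat.even_iff, Nat.not_even_iff] at h1 h2 <;> omega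

lemma not_pat {n : ℕ} {π : Equiv.Perm (Fin n)} (hAv : Avoids π p132) (a b c : Fin n)
    (hab : a < b) (hbc : b < c) (h1 : π a < π c) (h2 : π c < π b) : False := by
  apply hAv
  refine ⟨![a,b,c], ?_, ?_⟩
  · intro x y hxy
    fin_cases x <;> fin_cases y <;>
      simp_all <;>
      first
        | exact hab | exact hbc | exact hab.trans hbc
        | exact absurd hxy (by decide)
  · have h3 : π a < π b := h1.trans h2
    intro x y
    fin_cases x <;> fin_cases y <;>
      simp_all [p132] <;>
      first
        | exact h1 | exact h2 | exact h3
        | exact le_of_lt h1 | exact le_of_lt h2 | exact le_of_lt h3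
        | (intro h; exact absurd h (by first | exact asymm h1 | exact asymm h2 | exact asymm h3 | exact lt_irrefl _))

lemma lemA {n : ℕ} {π : Equiv.Perm (Fin n)}
    (hI : IsInvolution π) (hA : IsAlternating π) (hAv : Avoids π p132)
    (k : ℕ) (h4 : 4*k < n) (hk : 2*k < n)
    (hlow : ∀ p : Fin n, 2*k ≤ (p:ℕ) → (p:ℕ) + 2*k + 1 ≤ n → 2*k ≤ (π p : ℕ))
    (hup : ∀ p : Fin n, 2*k ≤ (p:ℕ) → (p:ℕ) + 2*k + 1 ≤ n → (π p : ℕ) + 2*k + 1 ≤ n) :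
    2*k ≤ (π ⟨2*k, hk⟩ : ℕ) ∧ ((π ⟨2*k, hk⟩ : ℕ)) + 2*k + 1 ≤ n ∧
    (π ⟨2*k, hk⟩ : ℕ) % 2 = 0 ∧ n < (π ⟨2*k, hk⟩ : ℕ) + 2*k + 3 := by
  set m : Fin n := π ⟨2*k, hk⟩ with hm
  have hπm : π m = ⟨2*k, hk⟩ := hI ⟨2*k, hk⟩
  have hmlow : 2*k ≤ (m:ℕ) := hlow ⟨2*k, hk⟩ (by simp) (by simp only [Fin.val_mk]; omega)
  have hmup : (m:ℕ) + 2*k + 1 ≤ n := hup ⟨2*k, hk⟩ (by simp) (by simp only [Fin.val_mk]; omega)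
  -- parity of m
  have hpar : (m:ℕ) % 2 = 0 := by
    by_contra hodd
    have hm1 : 2*k + 1 ≤ (m:ℕ) := by omega
    have h' : ((m:ℕ) - 1) + 1 < n := by omega
    have halt := (hA ⟨(m:ℕ)-1, by omega⟩ h').mpr (by rw [Nat.odd_iff]; simp only [Fin.val_mk]; omega)
    have heq : (⟨((⟨(m:ℕ)-1, by omega⟩ : Fin n) : ℕ) + 1, h'⟩ : Fin n) = m := Fin.ext (by simp only [Fin.val_mk]; omega)
    rw [heq, hπm] at halt
    have hge := hlow ⟨(m:ℕ)-1, by omega⟩ (by simp only [Fin.val_mk]; omega) (by simp only [Fin.val_mk]; omega)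
    rw [Fin.lt_def] at halt
    simp only [Fin.val_mk] at halt hge
    omega
  refine ⟨hmlow, hmup, hpar, ?_⟩
  -- no big gap
  by_contra hgap
  push_neg at hgap
  have hb : (m:ℕ) + 1 < n := by omega
  have hc : (m:ℕ) + 2 < n := by omega
  set b : Fin n := ⟨(m:ℕ)+1, hb⟩ with hbdef
  set c : Fin n := ⟨(m:ℕ)+2, hc⟩ with hcdef
  have hbv : (b:ℕ) = (m:ℕ)+1 := rfl
  have hcv : (c:ℕ) = (m:ℕ)+2 := rfl
  have hπb : 2*k < (π b : ℕ) := by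
    have h1 := hlow b (by omega) (by omega)
    have hne : (π b : ℕ) ≠ 2*k := by
      intro h
      have h2 : π b = π m := by rw [hπm]; exact Fin.ext (by simp only [Fin.val_mk]; omega)
      have h3 := congrArg Fin.val (π.injective h2)
      rw [hbv] at h3
      omega
    omega
  have hπc : 2*k < (π c : ℕ) := by
    have h1 := hlow c (by omega) (by omega)
    have hne : (π c : ℕ) ≠ 2*k := by
      intro h
      have h2 : π c = π m := by rw [hπm]; exact Fin.ext (by simp only [Fin.val_mk]; omega)
      have h3 := congrArg Fin.val (π.injective h2)
      rw [hcv] at h3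
      omega
    omega
  have hmb : m < b := by rw [Fin.lt_def]; omega
  have hbc : b < c := by rw [Fin.lt_def]; omega
  have hmc1 : π m < π c := by rw [hπm, Fin.lt_def]; simp only [Fin.val_mk]; omega
  have hne2 : π b ≠ π c := by
    intro h
    have h3 := congrArg Fin.val (π.injective h)
    rw [hbv, hcv] at h3
    omega
  have hbc2 : π b < π c := by
    rcases lt_or_gt_of_ne hne2 with h | h
    · exact h
    · exact (not_pat hAv m b c hmb hbc hmc1 h).elim
  have h' : ((b:ℕ)) + 1 < n := by omega
  have halt := (hA b h').not.mpr (by rw [Nat.odd_iff]; omega)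
  apply halt
  have heq : (⟨(b:ℕ)+1, h'⟩ : Fin n) = c := Fin.ext (by rw [hcv])
  rw [heq]
  exact hbc2

lemma odd_empty {n : ℕ} (hn : n % 2 = 1) (h3 : 3 ≤ n) {π : Equiv.Perm (Fin n)}
    (hI : IsInvolution π) (hA : IsAlternating π) (hAv : Avoids π p132) : False := by
  have h4 : 4*0 < n := by omega
  have hk : 2*0 < n := by omega
  obtain ⟨hl, hu, hp, hg⟩ := lemA hI hA hAv 0 h4 hk
    (fun p _ _ => Nat.zero_le _) (fun p _ _ => by have := (π p).isLt; omega)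
  have h' : ((⟨2*0, hk⟩ : Fin n) : ℕ) + 1 < n := by simp only [Fin.val_mk]; omega
  have halt := (hA ⟨2*0, hk⟩ h').mpr (by rw [Nat.odd_iff]; simp only [Fin.val_mk])
  rw [Fin.lt_def] at halt
  have := (π ⟨((⟨2*0, hk⟩ : Fin n) : ℕ) + 1, h'⟩).isLt
  omega

lemma key {n : ℕ} (hn : n % 2 = 0) {π : Equiv.Perm (Fin n)}
    (hI : IsInvolution π) (hA : IsAlternating π) (hAv : Avoids π p132) :
    ∀ k, 4*k < n → ∀ (hk : 2*k < n) (hk1 : 2*k+1 < n),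
      (π ⟨2*k, hk⟩ : ℕ) = n-2-2*k ∧ (π ⟨2*k+1, hk1⟩ : ℕ) = n-1-2*k := by
  intro k
  induction k using Nat.strong_induction_on with
  | _ k IH =>
    intro h4 hk hk1
    have hlow : ∀ p : Fin n, 2*k ≤ (p:ℕ) → (p:ℕ) + 2*k + 1 ≤ n → 2*k ≤ (π p : ℕ) := by
      intro p hp1 hp2
      by_contra hcon
      push_neg at hcon
      set v := (π p : ℕ) with hv
      have hk' : v/2 < k := by omega
      obtain ⟨e1, e2⟩ := IH (v/2) hk' (by omega) (by omega) (by omega)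
      have hip := hI p
      by_cases hpar : v % 2 = 0
      · have hfe : π p = ⟨2*(v/2), by omega⟩ := Fin.ext (by simp only [Fin.val_mk]; omega)
        rw [hfe] at hip
        have h5 := congrArg Fin.val hip
        rw [e1] at h5
        omega
      · have hfe : π p = ⟨2*(v/2)+1, by omega⟩ := Fin.ext (by simp only [Fin.val_mk]; omega)
        rw [hfe] at hip
        have h5 := congrArg Fin.val hip
        rw [e2] at h5
        omega
    have hup : ∀ p : Fin n, 2*k ≤ (p:ℕ) → (p:ℕ) + 2*k + 1 ≤ n → (π p : ℕ) + 2*k + 1 ≤ n := by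
      intro p hp1 hp2
      by_contra hcon
      push_neg at hcon
      set v := (π p : ℕ) with hv
      have hvlt := (π p).isLt
      have hk' : (n-1-v)/2 < k := by omega
      obtain ⟨e1, e2⟩ := IH ((n-1-v)/2) hk' (by omega) (by omega) (by omega)
      by_cases hpar : (n-1-v) % 2 = 0
      · have hfe : π (⟨2*((n-1-v)/2)+1, by omega⟩ : Fin n) = π p := by
          apply Fin.ext; rw [e2]; omega
        have h5 := congrArg Fin.val (π.injective hfe)
        simp only [Fin.val_mk] at h5
        omega
      · have hfe : π (⟨2*((n-1-v)/2), by omega⟩ : Fin n) = π p := by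
          apply Fin.ext; rw [e1]; omega
        have h5 := congrArg Fin.val (π.injective hfe)
        simp only [Fin.val_mk] at h5
        omega
    obtain ⟨hl, hu, hp, hg⟩ := lemA hI hA hAv k h4 hk hlow hup
    have hmval : (π ⟨2*k, hk⟩ : ℕ) = n-2-2*k := by omega
    refine ⟨hmval, ?_⟩
    have h' : ((⟨2*k, hk⟩ : Fin n) : ℕ) + 1 < n := by simp only [Fin.val_mk]; omega
    have halt := (hA ⟨2*k, hk⟩ h').mpr (by rw [Nat.odd_iff]; simp only [Fin.val_mk]; omega)
    rw [Fin.lt_def] at halt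
    have heq : (⟨((⟨2*k, hk⟩ : Fin n) : ℕ)+1, h'⟩ : Fin n) = ⟨2*k+1, hk1⟩ :=
      Fin.ext (by simp only [Fin.val_mk])
    rw [heq] at halt
    have hub := hup ⟨2*k+1, hk1⟩ (by simp only [Fin.val_mk]; omega)
      (by simp only [Fin.val_mk]; omega)
    omega

lemma targetPerm_inv {n : ℕ} (hn : Even n) : IsInvolution (targetPerm n hn) :=
  fun i => targetF_inv hn i

lemma targetPerm_alt {n : ℕ} (hn : Even n) : IsAlternating (targetPerm n hn) := by
  intro i h
  rw [Fin.lt_def, targetPerm_apply, targetPerm_apply, Nat.odd_iff]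
  simp only [Fin.val_mk]
  rw [Nat.even_iff] at hn
  unfold tv
  split_ifs with h1 h2 h2 <;>
    simp only [Nat.even_iff, Nat.not_even_iff] at h1 h2 <;> omega

lemma targetPerm_avoids {n : ℕ} (hn : Even n) : Avoids (targetPerm n hn) p132 := by
  rintro ⟨f, hf, hiff⟩
  have h02 : targetPerm n hn (f 0) < targetPerm n hn (f 2) :=
    (hiff 0 2).mpr (by decide)
  have e := targetPerm_step hn (f 0) (f 2) (hf (by decide)) h02
  have h01 : f 0 < f 1 := hf (by decide)
  have h12 : f 1 < f 2 := hf (by decide)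
  rw [Fin.lt_def] at h01 h12
  omega

lemma values_eq {n : ℕ} (hn : n % 2 = 0) {π : Equiv.Perm (Fin n)}
    (hI : IsInvolution π) (hA : IsAlternating π) (hAv : Avoids π p132)
    (i : Fin n) : (π i : ℕ) = tv n (i : ℕ) := by
  have hi := i.isLt
  unfold tv
  by_cases hpar : (i:ℕ) % 2 = 0
  · rw [if_pos (Nat.even_iff.mpr hpar)]
    by_cases hsz : 2*(i:ℕ) < n
    · obtain ⟨e1, -⟩ := key hn hI hA hAv ((i:ℕ)/2) (by omega) (by omega) (by omega)
      have heq : (⟨2*((i:ℕ)/2), by omega⟩ : Fin n) = i := Fin.ext (by simp only [Fin.val_mk]; omega)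
      rw [heq] at e1
      omega
    · obtain ⟨e1, -⟩ := key hn hI hA hAv ((n-2-(i:ℕ))/2) (by omega) (by omega) (by omega)
      have heq : π (⟨2*((n-2-(i:ℕ))/2), by omega⟩ : Fin n) = i := Fin.ext (by rw [e1]; omega)
      have h2 := congrArg π heq
      rw [hI] at h2
      have h3 := congrArg Fin.val h2.symm
      simp only [Fin.val_mk] at h3
      omega
  · rw [if_neg (fun h => hpar (Nat.even_iff.mp h))]
    by_cases hsz : 2*(i:ℕ) < n
    · obtain ⟨-, e2⟩ := key hn hI hA hAv ((i:ℕ)/2) (by omega) (by omega) (by omega)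
      have heq : (⟨2*((i:ℕ)/2)+1, by omega⟩ : Fin n) = i := Fin.ext (by simp only [Fin.val_mk]; omega)
      rw [heq] at e2
      omega
    · obtain ⟨-, e2⟩ := key hn hI hA hAv ((n-1-(i:ℕ))/2) (by omega) (by omega) (by omega)
      have heq : π (⟨2*((n-1-(i:ℕ))/2)+1, by omega⟩ : Fin n) = i := Fin.ext (by rw [e2]; omega)
      have h2 := congrArg π heq
      rw [hI] at h2
      have h3 := congrArg Fin.val h2.symm
      simp only [Fin.val_mk] at h3
      omega

/-- The number of alternating involutions of length n avoiding 132 is 1 if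
n is even or n = 1, and 0 otherwise. -/
theorem card_AI_avoiding_132 (n : ℕ) :
    Nat.card {π : Equiv.Perm (Fin n) //
      IsInvolution π ∧ IsAlternating π ∧ Avoids π p132} =
    (if Even n ∨ n = 1 then 1 else 0) := by
  by_cases he : n % 2 = 0
  · have hEv : Even n := Nat.even_iff.mpr he
    rw [if_pos (Or.inl hEv), Nat.card_eq_one_iff_unique]
    constructor
    · constructor
      rintro ⟨π1, h1, h2, h3⟩ ⟨π2, g1, g2, g3⟩
      apply Subtype.ext
      apply Equiv.ext
      intro x
      apply Fin.ext
      rw [values_eq he h1 h2 h3 x, values_eq he g1 g2 g3 x]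
    · exact ⟨⟨targetPerm n hEv, targetPerm_inv hEv, targetPerm_alt hEv,
        targetPerm_avoids hEv⟩⟩
  · by_cases h1 : n = 1
    · subst h1
      rw [if_pos (Or.inr rfl), Nat.card_eq_one_iff_unique]
      constructor
      · constructor
        rintro ⟨π1, -⟩ ⟨π2, -⟩
        exact Subtype.ext (Equiv.ext fun x => Subsingleton.elim _ _)
      · refine ⟨⟨1, fun i => rfl, fun i h => absurd h (by omega), ?_⟩⟩
        rintro ⟨f, hf, -⟩
        have := hf (show (0:Fin 3) < 1 by decide)
        rw [Subsingleton.elim (f 0) (f 1)] at this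
        exact lt_irrefl _ this
    · rw [if_neg (by rintro (h | h); exacts [he (Nat.even_iff.mp h), h1 h])]
      haveI : IsEmpty {π : Equiv.Perm (Fin n) //
          IsInvolution π ∧ IsAlternating π ∧ Avoids π p132} :=
        ⟨fun ⟨π, hI, hA, hAv⟩ => odd_empty (by omega) (by omega) hI hA hAv⟩
      exact Nat.card_of_isEmpty
end

section
/- The number of reverse alternating involutions of length 2n avoiding the pattern 4321 equals the n-th Motzkin number M_n. -/
/-!
Step `i` of a Motzkin path of length `n` occupies the positions `2i, 2i+1`: an `up` step opens an
arc at `2i`, a `down` step closes one at `2i+1`, and a `level` step does both. The ballot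
condition lets us match the `k`-th opener with the `k`-th closer, which is the only way to do so
without nesting arcs, and the resulting involution of `[0, 2n)` is reverse alternating. A
non-nesting involution avoids `4321`: its openers, its closers and its fixed points each form an
increasing subsequence, so a decreasing subsequence has at most three terms. Conversely, in a
`4321`-avoiding reverse alternating involution two nested arcs would give a `4321`, and so would
an arc opening at an odd or closing at an even position (together with the descent there);
reading off the pattern of openers and closers therefore gives back a Motzkin path. Counting
Motzkin paths by their first return to the axis gives the recurrence for `M`.
-/

inductive MotzkinStep
  | up
  | level
  | down
  deriving DecidableEq

open MotzkinStep

instance : Fintype MotzkinStep := ⟨{up, level, down}, fun s => by cases s <;> simp⟩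

def IsMotzkinPath (l : List MotzkinStep) : Prop :=
  (∀ m, (l.take m).count down ≤ (l.take m).count up) ∧ l.count down = l.count up

abbrev MotzkinPath (n : ℕ) : Type :=
  {l : List MotzkinStep // l.length = n ∧ IsMotzkinPath l}

instance (n : ℕ) : Finite (MotzkinPath n) :=
  have : Finite {l : List MotzkinStep // l.length = n} :=
    (List.finite_length_eq MotzkinStep n).to_subtype
  Finite.of_injective (fun p : MotzkinPath n => (⟨p.1, p.2.1⟩ : {l : List _ // l.length = n}))
    fun _ _ h => Subtype.ext (congrArg Subtype.val h :)

section MotzkinPath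

variable {a b t : List MotzkinStep}

lemma isMotzkinPath_nil : IsMotzkinPath [] := ⟨fun _ => by simp, rfl⟩

lemma isMotzkinPath_level_cons_iff : IsMotzkinPath (level :: t) ↔ IsMotzkinPath t := by
  refine ⟨fun ⟨hpre, htot⟩ => ⟨fun m => ?_, by simpa using htot⟩,
    fun ⟨hpre, htot⟩ => ⟨fun m => ?_, by simpa using htot⟩⟩
  · simpa using hpre (m + 1)
  · cases m <;> simp [hpre]

lemma not_isMotzkinPath_down_cons : ¬ IsMotzkinPath (down :: t) := fun h => by
  simpa using h.1 1

lemma IsMotzkinPath.up_cons_append_down_cons (ha : IsMotzkinPath a) (hb : IsMotzkinPath b) :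
    IsMotzkinPath (up :: (a ++ down :: b)) := by
  refine ⟨fun m => ?_, by simp [ha.2, hb.2]; ring⟩
  rcases m with _ | m
  · simp
  rcases le_or_gt m a.length with hm | hm
  · simpa [List.take_append_of_le_length hm] using (ha.1 m).trans (Nat.le_succ _)
  · obtain ⟨k, rfl⟩ : ∃ k, m = a.length + (k + 1) := ⟨m - a.length - 1, by omega⟩
    have := hb.1 k
    simp [List.take_append, List.take_of_length_le, ha.2]
    omega

lemma IsMotzkinPath.of_up_cons_append_down_cons (h : IsMotzkinPath (up :: (a ++ down :: b)))
    (ha : a.count down = a.count up) : IsMotzkinPath b := by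
  refine ⟨fun m => ?_, ?_⟩
  · have := h.1 (a.length + 2 + m)
    rw [show a.length + 2 + m = (a.length + 1 + m) + 1 by omega, List.take_succ_cons,
      List.take_append, List.take_of_length_le (by omega),
      show a.length + 1 + m - a.length = m + 1 by omega, List.take_succ_cons] at this
    simp [ha] at this
    omega
  · have := h.2
    simp [ha] at this
    omega

/-- Cut `t` just before its first prefix with more down steps than up steps. -/
lemma exists_eq_append_down_cons_of_count_lt
    (hex : ∃ m, (t.take m).count up < (t.take m).count down) :
    ∃ a b, t = a ++ down :: b ∧ IsMotzkinPath a := by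
  obtain ⟨i, hi⟩ : ∃ i, Nat.find hex = i + 1 := Nat.exists_eq_add_one_of_ne_zero fun h0 => by
    have := Nat.find_spec hex
    rw [h0] at this
    simp at this
  have hbefore (m : ℕ) (hm : m ≤ i) : (t.take m).count down ≤ (t.take m).count up :=
    not_lt.1 (Nat.find_min hex (by omega))
  have hfirst : (t.take (i + 1)).count up < (t.take (i + 1)).count down := by
    rw [← hi]
    exact Nat.find_spec hex
  have hi' := hbefore i le_rfl
  have hit : i < t.length := by
    by_contra! hle
    rw [List.take_of_length_le hle] at hi'
    rw [List.take_of_length_le (by omega)] at hfirst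
    omega
  rw [List.take_add_one, List.getElem?_eq_getElem hit] at hfirst
  have hdown : t[i] = down := by
    cases hti : t[i] <;> simp [hti] at hfirst ⊢ <;> omega
  refine ⟨t.take i, t.drop (i + 1), ?_, fun m => ?_, ?_⟩
  · rw [← hdown, ← List.drop_eq_getElem_cons hit, List.take_append_drop]
  · simpa [List.take_take] using hbefore (min m i) (min_le_right _ _)
  · simp [hdown] at hfirst
    omega

lemma IsMotzkinPath.exists_of_up_cons (h : IsMotzkinPath (up :: t)) :
    ∃ a b, t = a ++ down :: b ∧ IsMotzkinPath a ∧ IsMotzkinPath b := by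
  have htot : t.count down = t.count up + 1 := by simpa using h.2
  obtain ⟨a, b, rfl, ha⟩ := exists_eq_append_down_cons_of_count_lt
    ⟨t.length, by rw [List.take_length]; omega⟩
  exact ⟨a, b, rfl, ha, h.of_up_cons_append_down_cons ha.2⟩

lemma IsMotzkinPath.eq_of_append_down_cons_eq {a₁ a₂ b₁ b₂ : List MotzkinStep}
    (h₁ : IsMotzkinPath a₁) (h₂ : IsMotzkinPath a₂) (h : a₁ ++ down :: b₁ = a₂ ++ down :: b₂) :
    a₁ = a₂ ∧ b₁ = b₂ := by
  suffices ∀ {a₁ a₂ b₁ b₂ : List MotzkinStep}, IsMotzkinPath a₁ → IsMotzkinPath a₂ →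
      a₁ ++ down :: b₁ = a₂ ++ down :: b₂ → ¬ a₁.length < a₂.length by
    have hlen : a₁.length = a₂.length :=
      le_antisymm (not_lt.1 (this h₂ h₁ h.symm)) (not_lt.1 (this h₁ h₂ h))
    obtain ⟨rfl, hb⟩ := List.append_inj h hlen
    exact ⟨rfl, List.cons_injective hb⟩
  intro a₁ a₂ b₁ b₂ h₁ h₂ h hlt
  -- `a₁ ++ [down]` would be a prefix of `a₂` with more down steps than up steps
  have hprefix : a₂.take (a₁.length + 1) = a₁ ++ [down] := by
    have := congrArg (List.take (a₁.length + 1)) h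
    rw [List.take_append_of_le_length hlt] at this
    simpa [List.take_append, List.take_of_length_le] using this.symm
  have := h₂.1 (a₁.length + 1)
  rw [hprefix] at this
  simp [h₁.2] at this

end MotzkinPath

def motzkinPathSucc (n : ℕ) :
    MotzkinPath n ⊕ (Σ k : Fin n, MotzkinPath k × MotzkinPath (n - 1 - k)) → MotzkinPath (n + 1)
  | .inl p => ⟨level :: p.1, by simp [p.2.1], isMotzkinPath_level_cons_iff.2 p.2.2⟩
  | .inr ⟨k, p, q⟩ => ⟨up :: (p.1 ++ down :: q.1), by simp [p.2.1, q.2.1]; omega,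
      p.2.2.up_cons_append_down_cons q.2.2⟩

lemma motzkinPathSucc_injective (n : ℕ) : Function.Injective (motzkinPathSucc n) := by
  rintro (⟨l₁, _⟩ | ⟨k₁, ⟨a₁, ha₁, h₁⟩, ⟨b₁, _⟩⟩) (⟨l₂, _⟩ | ⟨k₂, ⟨a₂, ha₂, h₂⟩, ⟨b₂, _⟩⟩) h <;>
    simp only [motzkinPathSucc, Subtype.mk.injEq, List.cons.injEq, reduceCtorEq, false_and,
      true_and] at h
  · subst h; rfl
  · obtain ⟨rfl, rfl⟩ := h₁.eq_of_append_down_cons_eq h₂ h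
    obtain rfl : k₁ = k₂ := Fin.ext (ha₁.symm.trans ha₂)
    rfl

lemma motzkinPathSucc_surjective (n : ℕ) : Function.Surjective (motzkinPathSucc n) := by
  rintro ⟨_ | ⟨s, t⟩, hlen, h⟩
  · simp at hlen
  cases s with
  | level => exact ⟨.inl ⟨t, by simpa using hlen, isMotzkinPath_level_cons_iff.1 h⟩, rfl⟩
  | down => exact absurd h not_isMotzkinPath_down_cons
  | up =>
    obtain ⟨a, b, rfl, ha, hb⟩ := h.exists_of_up_cons
    simp only [List.length_cons, List.length_append] at hlen
    exact ⟨.inr ⟨⟨a.length, by omega⟩, ⟨a, rfl, ha⟩, ⟨b, by simp; omega, hb⟩⟩, rfl⟩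

lemma card_motzkinPath_zero : Nat.card (MotzkinPath 0) = 1 := by
  rw [Nat.card_eq_one_iff_unique]
  refine ⟨⟨fun p q => Subtype.ext ?_⟩, ⟨⟨[], rfl, isMotzkinPath_nil⟩⟩⟩
  rw [List.length_eq_zero_iff.1 p.2.1, List.length_eq_zero_iff.1 q.2.1]

lemma card_motzkinPath_succ (n : ℕ) :
    Nat.card (MotzkinPath (n + 1)) = Nat.card (MotzkinPath n) +
      ∑ k ∈ Finset.range n, Nat.card (MotzkinPath k) * Nat.card (MotzkinPath (n - 1 - k)) := by
  rw [← Nat.card_congr (Equiv.ofBijective _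
      ⟨motzkinPathSucc_injective n, motzkinPathSucc_surjective n⟩),
    Nat.card_sum, Nat.card_sigma, ← Fin.sum_univ_eq_sum_range
      (fun k => Nat.card (MotzkinPath k) * Nat.card (MotzkinPath (n - 1 - k)))]
  simp only [Nat.card_prod]

theorem card_motzkinPath {M : ℕ → ℕ} (hM0 : M 0 = 1)
    (hMrec : ∀ n, M (n + 1) = M n + ∑ k ∈ Finset.range n, M k * M (n - 1 - k)) (n : ℕ) :
    Nat.card (MotzkinPath n) = M n := by
  induction n using Nat.strong_induction_on with
  | _ n ih =>
    rcases n with _ | n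
    · rw [card_motzkinPath_zero, hM0]
    rw [card_motzkinPath_succ, hMrec, ih n n.lt_succ_self]
    congr 1
    refine Finset.sum_congr rfl fun k hk => ?_
    rw [ih k (by simp at hk; omega), ih (n - 1 - k) (by omega)]

open Nat (count nth)

lemma Nat.lt_card_toFinset_of_lt_count {p : ℕ → Prop} [DecidablePred p] {k N : ℕ}
    (h : k < count p N) (hf : (Set.ofPred p).Finite) : k < hf.toFinset.card :=
  h.trans_le (Nat.count_le_card hf N)

lemma Nat.count_congr {p q : ℕ → Prop} [DecidablePred p] [DecidablePred q] (h : ∀ x, p x ↔ q x)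
    (n : ℕ) : count p n = count q n := by
  obtain rfl : p = q := funext fun _ => propext (h _)
  congr

section BallotMatching

variable {O C : ℕ → Prop} [DecidablePred O] [DecidablePred C]

/-- `O` and `C` are the openers and closers of a ballot sequence on `[0, N)`. -/
structure IsBallot (O C : ℕ → Prop) [DecidablePred O] [DecidablePred C] (N : ℕ) : Prop where
  disjoint : ∀ x, O x → ¬ C x
  count_le : ∀ x, count C x ≤ count O x
  lt_of_opener : ∀ x, O x → x < N
  count_top : count O N ≤ count C N

variable (O C) in
noncomputable def ballotMatching (x : ℕ) : ℕ :=
  if O x then nth C (count O x) else if C x then nth O (count C x) else x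

lemma ballotMatching_of_opener {x : ℕ} (hO : O x) : ballotMatching O C x = nth C (count O x) :=
  if_pos hO

lemma ballotMatching_of_closer {x : ℕ} (hO : ¬ O x) (hC : C x) :
    ballotMatching O C x = nth O (count C x) := by
  rw [ballotMatching, if_neg hO, if_pos hC]

lemma ballotMatching_of_not {x : ℕ} (hO : ¬ O x) (hC : ¬ C x) : ballotMatching O C x = x := by
  rw [ballotMatching, if_neg hO, if_neg hC]

lemma ballotMatching_congr {O' C' : ℕ → Prop} [DecidablePred O'] [DecidablePred C']
    (hO : ∀ x, O x ↔ O' x) (hC : ∀ x, C x ↔ C' x) :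
    ballotMatching O C = ballotMatching O' C' := by
  obtain rfl : O = O' := funext fun _ => propext (hO _)
  obtain rfl : C = C' := funext fun _ => propext (hC _)
  congr

namespace IsBallot

variable {N x : ℕ} (h : IsBallot O C N)
include h

lemma count_lt_count_of_closer (hx : C x) : count C x < count O x := by
  have := h.count_le (x + 1)
  rw [Nat.count_succ, Nat.count_succ, if_pos hx, if_neg (fun hO => h.disjoint x hO hx)] at this
  omega

lemma ballotMatching_spec_of_closer (hx : C x) :
    O (ballotMatching O C x) ∧ count O (ballotMatching O C x) = count C x ∧
      ballotMatching O C x < x := by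
  have hlt := h.count_lt_count_of_closer hx
  rw [ballotMatching_of_closer (fun hO => h.disjoint x hO hx) hx]
  exact ⟨Nat.nth_mem _ (Nat.lt_card_toFinset_of_lt_count hlt),
    Nat.count_nth (Nat.lt_card_toFinset_of_lt_count hlt), Nat.nth_lt_of_lt_count hlt⟩

lemma count_lt_count_top_of_opener (hx : O x) : count O x < count C N :=
  (Nat.count_strict_mono hx (h.lt_of_opener x hx)).trans_le h.count_top

lemma ballotMatching_spec_of_opener (hx : O x) :
    C (ballotMatching O C x) ∧ count C (ballotMatching O C x) = count O x ∧
      x < ballotMatching O C x := by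
  have hlt := h.count_lt_count_top_of_opener hx
  have hmem : C (nth C (count O x)) := Nat.nth_mem _ (Nat.lt_card_toFinset_of_lt_count hlt)
  have hcount : count C (nth C (count O x)) = count O x :=
    Nat.count_nth (Nat.lt_card_toFinset_of_lt_count hlt)
  rw [ballotMatching_of_opener hx]
  refine ⟨hmem, hcount, lt_of_not_ge fun hle => ?_⟩
  have hne : nth C (count O x) ≠ x := fun heq => h.disjoint x hx (heq ▸ hmem)
  have := Nat.count_strict_mono hmem (lt_of_le_of_ne hle hne)
  have := h.count_le x
  omega

lemma ballotMatching_involutive : Function.Involutive (ballotMatching O C) := by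
  intro x
  by_cases hO : O x
  · obtain ⟨hC', hcount, -⟩ := h.ballotMatching_spec_of_opener hO
    rw [ballotMatching_of_closer (fun hO' => h.disjoint _ hO' hC') hC', hcount, Nat.nth_count hO]
  by_cases hC : C x
  · obtain ⟨hO', hcount, -⟩ := h.ballotMatching_spec_of_closer hC
    rw [ballotMatching_of_opener hO', hcount, Nat.nth_count hC]
  · rw [ballotMatching_of_not hO hC, ballotMatching_of_not hO hC]

lemma lt_ballotMatching_iff : x < ballotMatching O C x ↔ O x := by
  refine ⟨fun hlt => by_contra fun hO => ?_, fun hO => (h.ballotMatching_spec_of_opener hO).2.2⟩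
  by_cases hC : C x
  · exact (h.ballotMatching_spec_of_closer hC).2.2.not_gt hlt
  · rw [ballotMatching_of_not hO hC] at hlt
    exact lt_irrefl x hlt

lemma ballotMatching_lt_iff : ballotMatching O C x < x ↔ C x := by
  refine ⟨fun hlt => by_contra fun hC => ?_, fun hC => (h.ballotMatching_spec_of_closer hC).2.2⟩
  by_cases hO : O x
  · exact (h.ballotMatching_spec_of_opener hO).2.2.not_gt hlt
  · rw [ballotMatching_of_not hO hC] at hlt
    exact lt_irrefl x hlt

lemma ballotMatching_strictMonoOn :
    StrictMonoOn (ballotMatching O C) {x | x < ballotMatching O C x} := by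
  intro a (ha : a < _) b (hb : b < _) hab
  rw [h.lt_ballotMatching_iff] at ha hb
  rw [ballotMatching_of_opener ha, ballotMatching_of_opener hb]
  exact Nat.nth_lt_nth' (Nat.count_strict_mono ha hab)
    (Nat.lt_card_toFinset_of_lt_count (h.count_lt_count_top_of_opener hb))

end IsBallot

end BallotMatching

section NonNesting

/-- Viewing an involution of `ℕ` as a partial matching with arcs `x < f x`: no arc is nested
inside another. -/
def IsNonNesting (f : ℕ → ℕ) : Prop := StrictMonoOn f {x | x < f x}

def HasDecreasingFour (f : ℕ → ℕ) : Prop :=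
  ∃ a b c d, a < b ∧ b < c ∧ c < d ∧ f d < f c ∧ f c < f b ∧ f b < f a

variable {f : ℕ → ℕ}

lemma IsNonNesting.strictMonoOn_closers (h : IsNonNesting f) (hf : Function.Involutive f) :
    StrictMonoOn f {x | f x < x} := by
  intro a (ha : f a < a) b (hb : f b < b) hab
  refine lt_of_not_ge fun hle => ?_
  rcases hle.lt_or_eq with hlt | heq
  · have := h (show f b < f (f b) by rwa [hf]) (show f a < f (f a) by rwa [hf]) hlt
    rw [hf, hf] at this
    exact this.not_gt hab
  · exact hab.ne (hf.injective heq.symm)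

lemma count_closers_le_count_openers (hf : Function.Involutive f) (x : ℕ) :
    count (fun y => f y < y) x ≤ count (fun y => y < f y) x := by
  simp only [Nat.count_eq_card_filter_range]
  refine Finset.card_le_card_of_injOn f (fun y hy => ?_) hf.injective.injOn
  simp only [Finset.coe_filter, Finset.mem_range, Set.mem_ofPred_eq] at hy ⊢
  exact ⟨hy.2.trans hy.1, by rw [hf]; exact hy.2⟩

lemma count_closers_eq_count_openers (hf : Function.Involutive f) {N : ℕ}
    (hN : ∀ y < N, f y < N) :
    count (fun y => f y < y) N = count (fun y => y < f y) N := by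
  refine (count_closers_le_count_openers hf N).antisymm ?_
  simp only [Nat.count_eq_card_filter_range]
  refine Finset.card_le_card_of_injOn f (fun y hy => ?_) hf.injective.injOn
  simp only [Finset.coe_filter, Finset.mem_range, Set.mem_ofPred_eq] at hy ⊢
  exact ⟨hN y hy.1, by rw [hf]; exact hy.2⟩

/-- The arcs starting before `x` are exactly those ending before `f x`. -/
lemma IsNonNesting.count_closers_apply (h : IsNonNesting f) (hf : Function.Involutive f) {x : ℕ}
    (hx : x < f x) : count (fun y => f y < y) (f x) = count (fun y => y < f y) x := by
  simp only [Nat.count_eq_card_filter_range]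
  refine (Finset.card_nbij' f f (fun y hy => ?_) (fun y hy => ?_)
    (fun y _ => hf y) (fun y _ => hf y)).symm
  · simp only [Finset.coe_filter, Finset.mem_range, Set.mem_ofPred_eq] at hy ⊢
    refine ⟨h hy.2 hx hy.1, by rw [hf]; exact hy.2⟩
  · simp only [Finset.coe_filter, Finset.mem_range, Set.mem_ofPred_eq] at hy ⊢
    have := h.strictMonoOn_closers hf hy.2 (show f (f x) < f x by rwa [hf]) hy.1
    rw [hf] at this
    exact ⟨this, by rw [hf]; exact hy.2⟩

theorem IsNonNesting.ballotMatching_eq (h : IsNonNesting f) (hf : Function.Involutive f) :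
    ballotMatching (fun y => y < f y) (fun y => f y < y) = f := by
  funext x
  rcases lt_trichotomy x (f x) with hx | hx | hx
  · rw [ballotMatching, if_pos hx, ← h.count_closers_apply hf hx, Nat.nth_count]
    rwa [hf]
  · rw [ballotMatching, if_neg (by omega), if_neg (by omega), ← hx]
  · have hfx : f x < f (f x) := by rwa [hf]
    have hcount := h.count_closers_apply hf hfx
    rw [hf] at hcount
    rw [ballotMatching, if_neg (by omega), if_pos hx, hcount,
      Nat.nth_count (p := fun y => y < f y) hfx]

lemma IsNonNesting.compare_ne (h : IsNonNesting f) (hf : Function.Involutive f) {x y : ℕ}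
    (hxy : x < y) (hfxy : f y < f x) : compare x (f x) ≠ compare y (f y) := by
  intro heq
  rcases hx : compare x (f x) with _ | _ | _ <;> rw [hx, eq_comm] at heq
  · rw [compare_lt_iff_lt] at hx heq
    exact (h hx heq hxy).not_gt hfxy
  · rw [compare_eq_iff_eq] at hx heq
    omega
  · rw [compare_gt_iff_gt] at hx heq
    exact (h.strictMonoOn_closers hf hx heq hxy).not_gt hfxy

theorem IsNonNesting.not_hasDecreasingFour (h : IsNonNesting f) (hf : Function.Involutive f) :
    ¬ HasDecreasingFour f := by
  rintro ⟨a, b, c, d, hab, hbc, hcd, hdc, hcb, hba⟩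
  -- `compare x (f x)` takes three values, but `h.compare_ne` makes its four values distinct
  have key : ∀ p q r s : Ordering, p ≠ q → p ≠ r → p ≠ s → q ≠ r → q ≠ s → r ≠ s → False := by
    intro p q r s
    cases p <;> cases q <;> cases r <;> cases s <;> decide
  exact key _ _ _ _ (h.compare_ne hf hab hba) (h.compare_ne hf (hab.trans hbc) (hcb.trans hba))
    (h.compare_ne hf (hab.trans (hbc.trans hcd)) (hdc.trans (hcb.trans hba)))
    (h.compare_ne hf hbc hcb) (h.compare_ne hf (hbc.trans hcd) (hdc.trans hcb))
    (h.compare_ne hf hcd hdc)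

/-- Two nested arcs `a < b < f b < f a` form the pattern `4321`. -/
theorem isNonNesting_of_not_hasDecreasingFour (hf : Function.Involutive f)
    (h : ¬ HasDecreasingFour f) : IsNonNesting f := by
  intro a (ha : a < f a) b (hb : b < f b) hab
  have hne : f b ≠ f a := fun heq => hab.ne (hf.injective heq).symm
  refine lt_of_not_ge fun hle => h ⟨a, b, f b, f a, hab, hb, lt_of_le_of_ne hle hne, ?_, ?_, ?_⟩
  · rwa [hf, hf]
  · rwa [hf]
  · exact lt_of_le_of_ne hle hne

end NonNesting

section MotzkinInvolution

variable {f : ℕ → ℕ} {n : ℕ}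

def IsRevAlternatingBelow (f : ℕ → ℕ) (k : ℕ) : Prop :=
  ∀ q, q + 1 < k → (f (q + 1) < f q ↔ Odd (q + 1))

/-- The shape of a `4321`-avoiding reverse alternating involution of `[0, 2n)`, extended to `ℕ`
by fixed points: arcs open at even and close at odd positions, and each pair of positions
`2m, 2m+1` carries an opener, a closer, or both. -/
structure IsMotzkinInvolution (f : ℕ → ℕ) (n : ℕ) : Prop where
  involutive : Function.Involutive f
  isNonNesting : IsNonNesting f
  le_apply_of_even : ∀ q, Even q → q ≤ f q
  apply_le_of_odd : ∀ q, Odd q → f q ≤ q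
  not_fixed_pair : ∀ m < n, ¬ (f (2 * m) = 2 * m ∧ f (2 * m + 1) = 2 * m + 1)
  apply_of_le : ∀ q, 2 * n ≤ q → f q = q

lemma IsMotzkinInvolution.isRevAlternatingBelow (h : IsMotzkinInvolution f n) :
    IsRevAlternatingBelow f (2 * n) := by
  intro q hq
  obtain ⟨m, rfl | rfl⟩ := Nat.even_or_odd' q
  · have h₀ := h.le_apply_of_even (2 * m) (even_two_mul m)
    have h₁ := h.apply_le_of_odd (2 * m + 1) (odd_two_mul_add_one m)
    have hne : f (2 * m + 1) ≠ f (2 * m) := fun heq => by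
      simpa using h.involutive.injective heq
    simp only [odd_two_mul_add_one, iff_true]
    by_contra! hle
    exact h.not_fixed_pair m (by omega) ⟨by omega, by omega⟩
  · have h₁ := h.apply_le_of_odd (2 * m + 1) (odd_two_mul_add_one m)
    have h₂ := h.le_apply_of_even (2 * m + 1 + 1) ⟨m + 1, by ring⟩
    simp only [show ¬ Odd (2 * m + 1 + 1) from by simp [parity_simps], iff_false, not_lt]
    omega

lemma IsRevAlternatingBelow.apply_succ_lt (h : IsRevAlternatingBelow f (2 * n)) {m : ℕ}
    (hm : m < n) : f (2 * m + 1) < f (2 * m) :=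
  (h (2 * m) (by omega)).2 (odd_two_mul_add_one m)

section FromPattern

variable (hf : Function.Involutive f) (hfix : ∀ q, 2 * n ≤ q → f q = q)
  (halt : IsRevAlternatingBelow f (2 * n)) (h4 : ¬ HasDecreasingFour f)
include hf hfix halt h4

/-- An arc `2m + 1 < f (2m + 1)` would lie under the arc from `2m`, as `f (2m) > f (2m + 1)`. -/
lemma apply_le_of_odd_of_not_hasDecreasingFour {q : ℕ} (hq : Odd q) : f q ≤ q := by
  obtain ⟨m, rfl⟩ := hq
  by_contra! hlt
  have hm : m < n := by_contra fun hm => by rw [hfix _ (by omega)] at hlt; omega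
  have hdesc := halt.apply_succ_lt hm
  exact h4 ⟨2 * m, 2 * m + 1, f (2 * m + 1), f (2 * m), by omega, hlt, hdesc,
    by rw [hf, hf]; omega, by rw [hf]; exact hlt, hdesc⟩

lemma le_apply_of_even_of_not_hasDecreasingFour {q : ℕ} (hq : Even q) : q ≤ f q := by
  obtain ⟨m, rfl⟩ := hq
  rw [← two_mul]
  by_contra! hlt
  have hm : m < n := by_contra fun hm => by rw [hfix _ (by omega)] at hlt; omega
  have hdesc := halt.apply_succ_lt hm
  obtain ⟨a, ha | ha⟩ := Nat.even_or_odd' (f (2 * m))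
  · -- the arc from `f (2m + 1)` to `2m + 1` lies over the arc from `f (2m)` to `2m`
    refine h4 ⟨f (2 * m + 1), f (2 * m), 2 * m, 2 * m + 1, hdesc, hlt, by omega, ?_, ?_, ?_⟩
    · omega
    · rw [hf]; exact hlt
    · rw [hf, hf]; omega
  · have := apply_le_of_odd_of_not_hasDecreasingFour hf hfix halt h4 (q := f (2 * m)) ⟨a, ha⟩
    rw [hf] at this
    omega

end FromPattern

theorem isMotzkinInvolution_iff (hfix : ∀ q, 2 * n ≤ q → f q = q) :
    IsMotzkinInvolution f n ↔
      Function.Involutive f ∧ IsRevAlternatingBelow f (2 * n) ∧ ¬ HasDecreasingFour f := by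
  refine ⟨fun h => ⟨h.involutive, h.isRevAlternatingBelow,
    h.isNonNesting.not_hasDecreasingFour h.involutive⟩, fun ⟨hf, halt, h4⟩ => ⟨hf,
    isNonNesting_of_not_hasDecreasingFour hf h4,
    fun _ => le_apply_of_even_of_not_hasDecreasingFour hf hfix halt h4,
    fun _ => apply_le_of_odd_of_not_hasDecreasingFour hf hfix halt h4,
    fun m hm hfixed => ?_, hfix⟩⟩
  have := halt.apply_succ_lt hm
  omega

end MotzkinInvolution

lemma List.lt_length_of_getD_ne {α : Type*} {l : List α} {d : α} {i : ℕ} (h : l.getD i d ≠ d) :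
    i < l.length :=
  lt_of_not_ge fun hi => h (List.getD_eq_default _ _ hi)

section PathInvolution

variable {l : List MotzkinStep} {q : ℕ}

def IsOpenPos (l : List MotzkinStep) (q : ℕ) : Prop := Even q ∧ l.getD (q / 2) down ≠ down

def IsClosePos (l : List MotzkinStep) (q : ℕ) : Prop := Odd q ∧ l.getD (q / 2) up ≠ up

instance (l : List MotzkinStep) : DecidablePred (IsOpenPos l) :=
  fun _ => inferInstanceAs (Decidable (_ ∧ _))

instance (l : List MotzkinStep) : DecidablePred (IsClosePos l) :=
  fun _ => inferInstanceAs (Decidable (_ ∧ _))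

lemma count_isOpenPos_two_mul (l : List MotzkinStep) (m : ℕ) :
    count (IsOpenPos l) (2 * m) = (l.take m).count up + (l.take m).count level := by
  induction m with
  | zero => simp
  | succ m ih =>
    rw [show 2 * (m + 1) = 2 * m + 1 + 1 by ring, Nat.count_succ, Nat.count_succ, ih,
      List.take_add_one]
    have hdiv : (2 * m + 1) / 2 = m := by omega
    have hpar := Nat.not_even_iff_odd.2 (odd_two_mul_add_one m)
    rcases hm : l[m]? with _ | s
    · simp [IsOpenPos, List.getD_eq_getElem?_getD, hm, hdiv, hpar]
    · cases s <;> simp [IsOpenPos, List.getD_eq_getElem?_getD, hm, hdiv, hpar] <;> ring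

lemma count_isClosePos_two_mul (l : List MotzkinStep) (m : ℕ) :
    count (IsClosePos l) (2 * m) = (l.take m).count down + (l.take m).count level := by
  induction m with
  | zero => simp
  | succ m ih =>
    rw [show 2 * (m + 1) = 2 * m + 1 + 1 by ring, Nat.count_succ, Nat.count_succ, ih,
      List.take_add_one]
    have hdiv : (2 * m + 1) / 2 = m := by omega
    have hpar := Nat.not_odd_iff_even.2 (even_two_mul m)
    rcases hm : l[m]? with _ | s
    · simp [IsClosePos, List.getD_eq_getElem?_getD, hm, hdiv, hpar]
    · cases s <;> simp [IsClosePos, List.getD_eq_getElem?_getD, hm, hdiv, hpar] <;> ring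

lemma IsOpenPos.lt (h : IsOpenPos l q) : q < 2 * l.length := by
  have := List.lt_length_of_getD_ne h.2
  omega

lemma IsClosePos.lt (h : IsClosePos l q) : q < 2 * l.length := by
  have := List.lt_length_of_getD_ne h.2
  omega

lemma IsMotzkinPath.isBallot (h : IsMotzkinPath l) :
    IsBallot (IsOpenPos l) (IsClosePos l) (2 * l.length) where
  disjoint q hO hC := Nat.not_even_iff_odd.2 hC.1 hO.1
  count_le q := by
    have heven (m : ℕ) : count (IsClosePos l) (2 * m) ≤ count (IsOpenPos l) (2 * m) := by
      rw [count_isOpenPos_two_mul, count_isClosePos_two_mul]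
      have := h.1 m
      omega
    obtain ⟨m, rfl | rfl⟩ := Nat.even_or_odd' q
    · exact heven m
    · have hC : ¬ IsClosePos l (2 * m) := fun hC => Nat.not_odd_iff_even.2 (even_two_mul m) hC.1
      rw [Nat.count_succ, if_neg hC, add_zero]
      exact (heven m).trans (Nat.count_monotone _ (Nat.le_succ _))
  lt_of_opener _ hO := hO.lt
  count_top := by
    rw [count_isOpenPos_two_mul, count_isClosePos_two_mul, List.take_length, h.2]

noncomputable def pathInvolution (l : List MotzkinStep) : ℕ → ℕ :=
  ballotMatching (IsOpenPos l) (IsClosePos l)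

lemma IsMotzkinPath.isMotzkinInvolution (h : IsMotzkinPath l) :
    IsMotzkinInvolution (pathInvolution l) l.length where
  involutive := h.isBallot.ballotMatching_involutive
  isNonNesting := h.isBallot.ballotMatching_strictMonoOn
  le_apply_of_even q hq := not_lt.1 fun hlt =>
    Nat.not_even_iff_odd.2 (h.isBallot.ballotMatching_lt_iff.1 hlt).1 hq
  apply_le_of_odd q hq := not_lt.1 fun hlt =>
    Nat.not_even_iff_odd.2 hq (h.isBallot.lt_ballotMatching_iff.1 hlt).1
  not_fixed_pair m hm := by
    rintro ⟨h₀, h₁⟩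
    have h₀ : ¬ IsOpenPos l (2 * m) := fun hO => (h.isBallot.lt_ballotMatching_iff.2 hO).ne' h₀
    have h₁ : ¬ IsClosePos l (2 * m + 1) := fun hC =>
      (h.isBallot.ballotMatching_lt_iff.2 hC).ne h₁
    simp only [IsOpenPos, IsClosePos, even_two_mul, odd_two_mul_add_one, true_and, not_not,
      show (2 * m + 1) / 2 = m by omega, show 2 * m / 2 = m by omega,
      List.getD_eq_getElem _ _ hm] at h₀ h₁
    exact absurd (h₀.symm.trans h₁) (by decide)
  apply_of_le q hq := ballotMatching_of_not (fun hO => hO.lt.not_ge hq) (fun hC => hC.lt.not_ge hq)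

end PathInvolution

section PathOf

variable {l : List MotzkinStep}

def stepAt (f : ℕ → ℕ) (m : ℕ) : MotzkinStep :=
  if f (2 * m + 1) = 2 * m + 1 then up else if f (2 * m) = 2 * m then down else level

def pathOf (f : ℕ → ℕ) (n : ℕ) : List MotzkinStep := (List.range n).map (stepAt f)

variable {f : ℕ → ℕ} {n : ℕ}

lemma length_pathOf : (pathOf f n).length = n := by simp [pathOf]

lemma getD_pathOf (m : ℕ) (d : MotzkinStep) :
    (pathOf f n).getD m d = if m < n then stepAt f m else d := by
  split_ifs with hm
  · simp [pathOf, List.getElem?_range hm]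
  · exact List.getD_eq_default _ _ (by simpa [pathOf] using hm)

namespace IsMotzkinInvolution

variable (h : IsMotzkinInvolution f n)
include h

lemma isOpenPos_pathOf_iff (q : ℕ) : IsOpenPos (pathOf f n) q ↔ q < f q := by
  obtain ⟨m, rfl | rfl⟩ := Nat.even_or_odd' q
  · simp only [IsOpenPos, even_two_mul, true_and, show 2 * m / 2 = m by omega, getD_pathOf]
    by_cases hm : m < n
    · have := h.le_apply_of_even _ (even_two_mul m)
      have := h.not_fixed_pair m hm
      rw [if_pos hm, stepAt]
      split_ifs <;> simp <;> omega
    · rw [if_neg hm, h.apply_of_le _ (by omega)]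
      simp
  · have := h.apply_le_of_odd _ (odd_two_mul_add_one m)
    simp only [IsOpenPos, Nat.not_even_iff_odd.2 (odd_two_mul_add_one m), false_and, false_iff]
    omega

lemma isClosePos_pathOf_iff (q : ℕ) : IsClosePos (pathOf f n) q ↔ f q < q := by
  obtain ⟨m, rfl | rfl⟩ := Nat.even_or_odd' q
  · have := h.le_apply_of_even _ (even_two_mul m)
    simp only [IsClosePos, Nat.not_odd_iff_even.2 (even_two_mul m), false_and, false_iff]
    omega
  · simp only [IsClosePos, odd_two_mul_add_one, true_and, show (2 * m + 1) / 2 = m by omega,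
      getD_pathOf]
    by_cases hm : m < n
    · have := h.apply_le_of_odd _ (odd_two_mul_add_one m)
      rw [if_pos hm, stepAt]
      split_ifs <;> simp <;> omega
    · rw [if_neg hm, h.apply_of_le _ (by omega)]
      simp

lemma maps_lt {q : ℕ} (hq : q < 2 * n) : f q < 2 * n := by
  by_contra! hle
  have := h.involutive q
  rw [h.apply_of_le _ hle] at this
  omega

lemma isMotzkinPath_pathOf : IsMotzkinPath (pathOf f n) := by
  have hO := Nat.count_congr h.isOpenPos_pathOf_iff
  have hC := Nat.count_congr h.isClosePos_pathOf_iff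
  refine ⟨fun m => ?_, ?_⟩
  · have := count_closers_le_count_openers h.involutive (2 * m)
    rw [← hO, ← hC, count_isOpenPos_two_mul, count_isClosePos_two_mul] at this
    omega
  · have := count_closers_eq_count_openers h.involutive (fun _ => h.maps_lt)
    rw [← hO, ← hC, count_isOpenPos_two_mul, count_isClosePos_two_mul,
      List.take_of_length_le length_pathOf.le] at this
    omega

lemma pathInvolution_pathOf : pathInvolution (pathOf f n) = f := by
  rw [pathInvolution, ballotMatching_congr h.isOpenPos_pathOf_iff h.isClosePos_pathOf_iff,
    h.isNonNesting.ballotMatching_eq h.involutive]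

end IsMotzkinInvolution

lemma IsMotzkinPath.pathOf_pathInvolution (h : IsMotzkinPath l) :
    pathOf (pathInvolution l) l.length = l := by
  refine List.ext_getElem length_pathOf fun m hm _ => ?_
  rw [length_pathOf] at hm
  have hO : pathInvolution l (2 * m) = 2 * m ↔ l[m] = down := by
    have hle := h.isMotzkinInvolution.le_apply_of_even _ (even_two_mul m)
    have hopen := h.isBallot.lt_ballotMatching_iff (x := 2 * m)
    simp only [IsOpenPos, even_two_mul, true_and, show 2 * m / 2 = m by omega,
      List.getD_eq_getElem _ _ hm] at hopen
    refine not_iff_not.1 (Iff.trans ?_ hopen)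
    unfold pathInvolution at hle ⊢
    omega
  have hC : pathInvolution l (2 * m + 1) = 2 * m + 1 ↔ l[m] = up := by
    have hle := h.isMotzkinInvolution.apply_le_of_odd _ (odd_two_mul_add_one m)
    have hclose := h.isBallot.ballotMatching_lt_iff (x := 2 * m + 1)
    simp only [IsClosePos, odd_two_mul_add_one, true_and, show (2 * m + 1) / 2 = m by omega,
      List.getD_eq_getElem _ _ hm] at hclose
    refine not_iff_not.1 (Iff.trans ?_ hclose)
    unfold pathInvolution at hle ⊢
    omega
  simp only [pathOf, List.getElem_map, List.getElem_range, stepAt, hO, hC]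
  cases l[m] <;> simp

end PathOf

noncomputable def motzkinPathEquiv (n : ℕ) :
    MotzkinPath n ≃ {f : ℕ → ℕ // IsMotzkinInvolution f n} where
  toFun p := ⟨pathInvolution p.1, by obtain ⟨l, rfl, hl⟩ := p; exact hl.isMotzkinInvolution⟩
  invFun f := ⟨pathOf f.1 n, length_pathOf, f.2.isMotzkinPath_pathOf⟩
  left_inv p := by
    obtain ⟨l, rfl, hl⟩ := p
    exact Subtype.ext hl.pathOf_pathInvolution
  right_inv f := Subtype.ext f.2.pathInvolution_pathOf

section NatPerm

variable {k : ℕ} (σ : Equiv.Perm (Fin k))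

def natPerm : Equiv.Perm ℕ := σ.extendDomain Fin.equivSubtype

lemma natPerm_apply_of_lt {q : ℕ} (hq : q < k) : natPerm σ q = σ ⟨q, hq⟩ := by
  rw [natPerm, Equiv.Perm.extendDomain_apply_subtype (p := (· < k)) _ _ hq]
  rfl

lemma natPerm_apply_of_le {q : ℕ} (hq : k ≤ q) : natPerm σ q = q :=
  Equiv.Perm.extendDomain_apply_not_subtype _ _ hq.not_gt

lemma natPerm_lt {q : ℕ} (hq : q < k) : natPerm σ q < k := by
  rw [natPerm_apply_of_lt σ hq]
  exact Fin.isLt _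

lemma IsInvolution.involutive_natPerm {σ : Equiv.Perm (Fin k)} (h : IsInvolution σ) :
    Function.Involutive (natPerm σ) := by
  intro q
  rcases lt_or_ge q k with hq | hq
  · rw [natPerm_apply_of_lt σ hq, natPerm_apply_of_lt σ (σ _).2, h]
  · rw [natPerm_apply_of_le σ hq, natPerm_apply_of_le σ hq]

lemma isRevAlternating_iff : IsRevAlternating σ ↔ IsRevAlternatingBelow (natPerm σ) k := by
  refine ⟨fun h q hq => ?_, fun h i hi => ?_⟩
  · rw [natPerm_apply_of_lt σ hq, natPerm_apply_of_lt σ (q.lt_succ_self.trans hq)]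
    exact h ⟨q, _⟩ hq
  · have := h i hi
    rwa [natPerm_apply_of_lt σ hi, natPerm_apply_of_lt σ i.2] at this

lemma contains_p4321_iff :
    Contains σ p4321 ↔ ∃ g : Fin 4 → Fin k, StrictMono g ∧ StrictAnti (σ ∘ g) := by
  have hp : ∀ i j : Fin 4, p4321 i < p4321 j ↔ j < i := by decide
  simp only [Contains, hp]
  exact exists_congr fun g => and_congr_right fun _ =>
    ⟨fun h a b hab => (h b a).2 hab, fun h a b => h.lt_iff_gt⟩

lemma avoids_p4321_iff : Avoids σ p4321 ↔ ¬ HasDecreasingFour (natPerm σ) := by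
  have happly (i : Fin k) : natPerm σ i = σ i := natPerm_apply_of_lt σ i.2
  refine not_congr ((contains_p4321_iff σ).trans ⟨?_, ?_⟩)
  · rintro ⟨g, hg, hσg⟩
    refine ⟨g 0, g 1, g 2, g 3, hg (by decide), hg (by decide), hg (by decide), ?_, ?_, ?_⟩ <;>
      simp only [happly] <;> exact hσg (by decide)
  · rintro ⟨a, b, c, d, hab, hbc, hcd, hdc, hcb, hba⟩
    -- positions `≥ k` are fixed, so the pattern lies below `k`
    have hd : d < k := by
      by_contra! hd
      have hc : k ≤ c := by
        by_contra! hc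
        have := (σ ⟨c, hc⟩).2
        rw [natPerm_apply_of_le σ hd, natPerm_apply_of_lt σ hc] at hdc
        omega
      rw [natPerm_apply_of_le σ hd, natPerm_apply_of_le σ hc] at hdc
      omega
    refine ⟨![⟨a, by omega⟩, ⟨b, by omega⟩, ⟨c, by omega⟩, ⟨d, hd⟩], ?_, ?_⟩
    · rw [Fin.strictMono_iff_lt_succ]
      intro i
      fin_cases i <;> simpa [Fin.lt_def]
    · rw [Fin.strictAnti_iff_succ_lt]
      intro i
      fin_cases i <;> simpa [Fin.lt_def, ← happly]

end NatPerm

def Function.Involutive.finPerm {f : ℕ → ℕ} (hf : Function.Involutive f) {k : ℕ}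
    (hk : ∀ q < k, f q < k) : Equiv.Perm (Fin k) where
  toFun x := ⟨f x, hk x x.2⟩
  invFun x := ⟨f x, hk x x.2⟩
  left_inv x := Fin.ext (hf x)
  right_inv x := Fin.ext (hf x)

lemma Function.Involutive.isInvolution_finPerm {f : ℕ → ℕ} (hf : Function.Involutive f) {k : ℕ}
    (hk : ∀ q < k, f q < k) : IsInvolution (hf.finPerm hk) :=
  fun x => Fin.ext (hf x)

lemma Function.Involutive.natPerm_finPerm {f : ℕ → ℕ} (hf : Function.Involutive f) {k : ℕ}
    (hk : ∀ q < k, f q < k) (hfix : ∀ q, k ≤ q → f q = q) : ⇑(natPerm (hf.finPerm hk)) = f := by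
  funext q
  rcases lt_or_ge q k with hq | hq
  · rw [natPerm_apply_of_lt _ hq]
    rfl
  · rw [natPerm_apply_of_le _ hq, hfix q hq]

lemma Function.Involutive.finPerm_natPerm {k : ℕ} (σ : Equiv.Perm (Fin k))
    (hf : Function.Involutive (natPerm σ)) (hk : ∀ q < k, natPerm σ q < k) :
    hf.finPerm hk = σ :=
  Equiv.ext fun x => Fin.ext (natPerm_apply_of_lt σ x.2)

noncomputable def revAltInvolutionEquiv (n : ℕ) :
    {π : Equiv.Perm (Fin (2 * n)) // IsInvolution π ∧ IsRevAlternating π ∧ Avoids π p4321} ≃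
      {f : ℕ → ℕ // IsMotzkinInvolution f n} where
  toFun π := ⟨natPerm π.1, (isMotzkinInvolution_iff fun _ => natPerm_apply_of_le π.1).2
    ⟨π.2.1.involutive_natPerm, (isRevAlternating_iff π.1).1 π.2.2.1,
      (avoids_p4321_iff π.1).1 π.2.2.2⟩⟩
  invFun f := ⟨f.2.involutive.finPerm fun _ => f.2.maps_lt,
    f.2.involutive.isInvolution_finPerm _, by
      have hnat := f.2.involutive.natPerm_finPerm (fun _ => f.2.maps_lt) f.2.apply_of_le
      rw [isRevAlternating_iff, avoids_p4321_iff, hnat]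
      exact ⟨f.2.isRevAlternatingBelow, f.2.isNonNesting.not_hasDecreasingFour f.2.involutive⟩⟩
  left_inv π := Subtype.ext <|
    Function.Involutive.finPerm_natPerm π.1 π.2.1.involutive_natPerm fun _ => natPerm_lt π.1
  right_inv f := Subtype.ext <|
    f.2.involutive.natPerm_finPerm (fun _ => f.2.maps_lt) f.2.apply_of_le

/-- The number of reverse alternating involutions of length 2n avoiding 4321
is the n-th Motzkin number. -/
theorem card_RAI_even_avoiding_4321 (M : ℕ → ℕ) (hM0 : M 0 = 1)
    (hMrec : ∀ n, M (n + 1) = M n + ∑ k ∈ Finset.range n, M k * M (n - 1 - k))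
    (n : ℕ) :
    Nat.card {π : Equiv.Perm (Fin (2 * n)) //
      IsInvolution π ∧ IsRevAlternating π ∧ Avoids π p4321} = M n := by
  rw [Nat.card_congr ((revAltInvolutionEquiv n).trans (motzkinPathEquiv n).symm),
    card_motzkinPath hM0 hMrec]
end

section
/- The recurrence |AI_{2n+1}(4321)| = |AI_{2n}(4321)| + |AI_{2n−3}(4321)| holds, where AI_m(4321) denotes the set of alternating involutions of length m avoiding 4321. -/
/-!
In one-line notation, an alternating involution `π` of length `2n+1` ends with a descent, and
avoiding `4321` forces `π(2n) ∈ {2n, 2n+1}`. If moreover `π(2n-1) = 2n-1` and `π(2n+1) = 2n-2`,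
the last four entries form a `4231` lying above all earlier ones, and cutting them off is a
bijection onto `AI_{2n-3}(4321)`. Otherwise, deleting the fixed point `2n`, or turning the 2-cycle
`(2n 2n+1)` into the fixed point `2n`, is a bijection onto `AI_{2n}(4321)`: the new ascent at
`2n-1` is exactly `π(2n-1) < π(2n+1)`, which holds outside the first case.
-/

namespace AltInv4321

open Equiv

abbrev AI (m : ℕ) : Type :=
  {π : Perm (Fin m) // IsInvolution π ∧ IsAlternating π ∧ Avoids π p4321}

theorem contains_p4321_iff {m : ℕ} (σ : Perm (Fin m)) :
    Contains σ p4321 ↔ ∃ a b c d : Fin m,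
      a < b ∧ b < c ∧ c < d ∧ σ b < σ a ∧ σ c < σ b ∧ σ d < σ c := by
  have hp : ∀ x y : Fin 4, p4321 x < p4321 y ↔ y < x := by decide
  constructor
  · rintro ⟨g, hg, hpat⟩
    exact ⟨g 0, g 1, g 2, g 3, hg (by decide), hg (by decide), hg (by decide),
      (hpat 1 0).2 (by decide), (hpat 2 1).2 (by decide), (hpat 3 2).2 (by decide)⟩
  · rintro ⟨a, b, c, d, hab, hbc, hcd, hba, hcb, hdc⟩
    have hmono : StrictMono ![a, b, c, d] := Fin.strictMono_iff_lt_succ.2 <| by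
      intro i; fin_cases i <;> assumption
    have hanti : StrictAnti (σ ∘ ![a, b, c, d]) := Fin.strictAnti_iff_succ_lt.2 <| by
      intro i; fin_cases i <;> assumption
    exact ⟨_, hmono, fun x y => hanti.lt_iff_gt.trans (hp x y).symm⟩

def Avoids4321 (m : ℕ) (f : ℕ → ℕ) : Prop :=
  ∀ a b c d, a < b → b < c → c < d → d < m → f b < f a → f c < f b → f d < f c → False

/-- `AI_m(4321)` modelled by involutions of `ℕ` fixing every `i ≥ m`. Positions are 0-based, so
the ascents of an alternating permutation sit at even positions. -/
structure IsAI4321 (m : ℕ) (f : ℕ → ℕ) : Prop where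
  apply_apply : ∀ i, f (f i) = i
  eq_self_of_le : ∀ i, m ≤ i → f i = i
  ascent : ∀ i, i + 1 < m → i % 2 = 0 → f i < f (i + 1)
  descent : ∀ i, i + 1 < m → i % 2 = 1 → f (i + 1) < f i
  avoids : Avoids4321 m f

namespace IsAI4321

variable {m : ℕ} {f : ℕ → ℕ}

theorem injective (hf : IsAI4321 m f) : f.Injective :=
  Function.LeftInverse.injective hf.apply_apply

theorem apply_eq_of_eq (hf : IsAI4321 m f) {a b : ℕ} (h : f a = b) : f b = a :=
  h ▸ hf.apply_apply a

theorem lt (hf : IsAI4321 m f) {i : ℕ} (hi : i < m) : f i < m := by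
  by_contra h
  have := hf.eq_self_of_le _ (not_lt.1 h)
  rw [hf.apply_apply] at this
  omega

theorem mod_two_of_apply_eq (hf : IsAI4321 m f) {j : ℕ} (h : f j + 1 = m) (hj : j + 1 < m) :
    j % 2 = 1 := by
  by_contra hj2
  have := hf.ascent j hj (by omega)
  have := hf.lt hj
  omega

end IsAI4321

def toModel {m : ℕ} (π : Perm (Fin m)) (i : ℕ) : ℕ :=
  if h : i < m then π ⟨i, h⟩ else i

theorem toModel_fin {m : ℕ} (π : Perm (Fin m)) (i : Fin m) : toModel π i = π i := by
  simp [toModel]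

theorem isAI4321_toModel_iff {m : ℕ} (π : Perm (Fin m)) :
    IsAI4321 m (toModel π) ↔ IsInvolution π ∧ IsAlternating π ∧ Avoids π p4321 := by
  have hlt : ∀ i j (hi : i < m) (hj : j < m),
      toModel π i < toModel π j ↔ π ⟨i, hi⟩ < π ⟨j, hj⟩ := by
    intro i j hi hj
    simp only [toModel, dif_pos hi, dif_pos hj]
    rfl
  have hne : ∀ i, i + 1 < m → toModel π (i + 1) ≠ toModel π i := by
    intro i hi
    simp [toModel, hi, show i < m by omega, Fin.val_inj]
  have halt : IsAlternating π ↔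
      ∀ i, i + 1 < m → (toModel π i < toModel π (i + 1) ↔ i % 2 = 0) := by
    have hodd : ∀ i : ℕ, Odd (i + 1) ↔ i % 2 = 0 := fun i => by rw [Nat.odd_iff]; omega
    constructor
    · intro h i hi
      rw [hlt _ _ (by omega) hi, ← hodd]
      exact h ⟨i, by omega⟩ hi
    · intro h i hi
      rw [← hlt _ _ i.2 hi, hodd]
      exact h i hi
  have hav : Avoids π p4321 ↔ Avoids4321 m (toModel π) := by
    rw [Avoids, contains_p4321_iff]
    constructor
    · intro h a b c d hab hbc hcd hd hba hcb hdc
      exact h ⟨⟨a, by omega⟩, ⟨b, by omega⟩, ⟨c, by omega⟩, ⟨d, hd⟩,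
        hab, hbc, hcd, (hlt _ _ _ _).1 hba, (hlt _ _ _ _).1 hcb, (hlt _ _ _ _).1 hdc⟩
    · rintro h ⟨a, b, c, d, hab, hbc, hcd, hba, hcb, hdc⟩
      exact h a b c d hab hbc hcd d.2 ((hlt _ _ b.2 a.2).2 hba)
        ((hlt _ _ c.2 b.2).2 hcb) ((hlt _ _ d.2 c.2).2 hdc)
  rw [halt, hav]
  constructor
  · intro hf
    refine ⟨fun i => Fin.ext (by simpa [toModel_fin] using hf.apply_apply i), fun i hi => ?_,
      hf.avoids⟩
    rcases Nat.mod_two_eq_zero_or_one i with h | h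
    · simpa [h] using hf.ascent i hi h
    · have := hf.descent i hi h
      omega
  · rintro ⟨hinv, halt, hav⟩
    refine ⟨fun i => ?_, fun i hi => by simp [toModel, not_lt.2 hi],
      fun i hi h => (halt i hi).2 h, fun i hi h => ?_, hav⟩
    · by_cases hi : i < m
      · simpa [toModel, hi] using congrArg Fin.val (hinv ⟨i, hi⟩)
      · simp [toModel, hi]
    · have := (halt i hi).not.2 (by omega)
      have := hne i hi
      omega

def ofModel {m : ℕ} {f : ℕ → ℕ} (hf : IsAI4321 m f) : Perm (Fin m) where
  toFun i := ⟨f i, hf.lt i.2⟩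
  invFun i := ⟨f i, hf.lt i.2⟩
  left_inv i := Fin.ext (hf.apply_apply i)
  right_inv i := Fin.ext (hf.apply_apply i)

theorem toModel_ofModel {m : ℕ} {f : ℕ → ℕ} (hf : IsAI4321 m f) : toModel (ofModel hf) = f := by
  funext i
  by_cases hi : i < m
  · simp [toModel, ofModel, hi]
  · simp [toModel, hi, hf.eq_self_of_le i (not_lt.1 hi)]

def modelEquiv (m : ℕ) : AI m ≃ {f : ℕ → ℕ // IsAI4321 m f} where
  toFun π := ⟨toModel π.1, (isAI4321_toModel_iff π.1).2 π.2⟩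
  invFun f := ⟨ofModel f.2, (isAI4321_toModel_iff _).1 ((toModel_ofModel f.2).symm ▸ f.2)⟩
  left_inv π := Subtype.ext <| Equiv.ext fun i => Fin.ext <| by simp [ofModel, toModel]
  right_inv f := Subtype.ext (toModel_ofModel f.2)

theorem Avoids4321.of_inversions_on {m M : ℕ} {f g : ℕ → ℕ} (S : ℕ → Prop) (p : ℕ → ℕ)
    (hf : Avoids4321 M f)
    (hS : ∀ a b c d, a < b → b < c → c < d → d < m → g b < g a → g c < g b → g d < g c →
      S a ∧ S b ∧ S c ∧ S d)
    (hp : ∀ i j, S i → S j → i < j → j < m → g j < g i →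
      p i < p j ∧ p j < M ∧ f (p j) < f (p i)) :
    Avoids4321 m g := by
  intro a b c d hab hbc hcd hd hba hcb hdc
  obtain ⟨ha, hb, hc, hd'⟩ := hS a b c d hab hbc hcd hd hba hcb hdc
  obtain ⟨pab, -, fab⟩ := hp a b ha hb hab (by omega) hba
  obtain ⟨pbc, -, fbc⟩ := hp b c hb hc hbc (by omega) hcb
  obtain ⟨pcd, pd, fcd⟩ := hp c d hc hd' hcd hd hdc
  exact hf _ _ _ _ pab pbc pcd pd fab fbc fcd

theorem Avoids4321.of_inversions {m M : ℕ} {f g : ℕ → ℕ} (p : ℕ → ℕ) (hf : Avoids4321 M f)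
    (hp : ∀ i j, i < j → j < m → g j < g i → p i < p j ∧ p j < M ∧ f (p j) < f (p i)) :
    Avoids4321 m g :=
  hf.of_inversions_on (fun _ => True) p
    (fun _ _ _ _ _ _ _ _ _ _ _ => ⟨trivial, trivial, trivial, trivial⟩) fun i j _ _ => hp i j

variable {k : ℕ} {f g t : ℕ → ℕ}

namespace IsAI4321

theorem apply_last_lt (hf : IsAI4321 (2 * k + 5) f) : f (2 * k + 4) < f (2 * k + 3) :=
  hf.descent (2 * k + 3) (by omega) (by omega)

/-- Otherwise the positions `f (2k+4) < f (2k+3) < 2k+3 < 2k+4` would carry a `4321`. -/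
theorem apply_penult (hf : IsAI4321 (2 * k + 5) f) :
    f (2 * k + 3) = 2 * k + 3 ∨ f (2 * k + 3) = 2 * k + 4 := by
  by_contra h
  have := hf.apply_last_lt
  have := hf.lt (i := 2 * k + 3) (by omega)
  have := hf.apply_apply (2 * k + 3)
  have := hf.apply_apply (2 * k + 4)
  exact hf.avoids (f (2 * k + 4)) (f (2 * k + 3)) (2 * k + 3) (2 * k + 4)
    (by omega) (by omega) (by omega) (by omega) (by omega) (by omega) (by omega)

theorem apply_last_mod_two (hf : IsAI4321 (2 * k + 5) f) : f (2 * k + 4) % 2 = 1 := by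
  have := hf.apply_last_lt
  have := hf.lt (i := 2 * k + 3) (by omega)
  exact hf.mod_two_of_apply_eq (by rw [hf.apply_apply]) (by omega)

theorem apply_lt_penult (hf : IsAI4321 (2 * k + 5) f) {i : ℕ} (hi : i < 2 * k + 3)
    (hc : i ≠ f (2 * k + 4)) : f i < 2 * k + 3 := by
  have := hf.apply_penult
  have := hf.lt (i := i) (by omega)
  have h1 : f i ≠ 2 * k + 3 := fun h => by have := hf.apply_eq_of_eq h; omega
  have h2 : f i ≠ 2 * k + 4 := fun h => hc (hf.apply_eq_of_eq h).symm
  omega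

end IsAI4321

/-- Within `AI_{2k+5}(4321)` this forces the last four entries to be `2k+4, 2k+2, 2k+3, 2k+1`
(0-based values): a copy of `4231` lying above all earlier entries. -/
def EndsWith4231 (k : ℕ) (f : ℕ → ℕ) : Prop :=
  f (2 * k + 2) = 2 * k + 2 ∧ f (2 * k + 4) = 2 * k + 1

instance (k : ℕ) (f : ℕ → ℕ) : Decidable (EndsWith4231 k f) :=
  inferInstanceAs (Decidable (_ ∧ _))

theorem IsAI4321.apply_antepenult_lt (hf : IsAI4321 (2 * k + 5) f) (hE : ¬ EndsWith4231 k f) :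
    f (2 * k + 2) < f (2 * k + 4) := by
  have hc := hf.apply_last_lt
  have hcodd := hf.apply_last_mod_two
  have := hf.lt (i := 2 * k + 2) (by omega)
  have h2 : f (2 * k + 2) ≠ f (2 * k + 4) := fun h => by have := hf.injective h; omega
  have h3 : f (2 * k + 2) ≠ 2 * k + 4 := fun h => by have := hf.apply_eq_of_eq h; omega
  rcases hf.apply_penult with hL | hL
  · have h4 : f (2 * k + 2) ≠ 2 * k + 3 := fun h => by
      have := hf.injective (h.trans hL.symm); omega
    by_contra hlt
    by_cases hfix : f (2 * k + 2) = 2 * k + 2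
    · -- the descent at `2k+1` forces `f (2k+1) = 2k+4`, i.e. the excluded tail `4231`
      have : f (2 * k + 2) < f (2 * k + 1) := hf.descent (2 * k + 1) (by omega) (by omega)
      have := hf.lt (i := 2 * k + 1) (by omega)
      have h5 : f (2 * k + 1) ≠ 2 * k + 3 := fun h => by
        have := hf.injective (h.trans hL.symm); omega
      have h6 : f (2 * k + 1) = 2 * k + 4 := by omega
      exact hE ⟨hfix, hf.apply_eq_of_eq h6⟩
    · have := hf.apply_apply (2 * k + 2)
      have := hf.apply_apply (2 * k + 4)
      exact hf.avoids (f (2 * k + 4)) (f (2 * k + 2)) (2 * k + 2) (2 * k + 4)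
        (by omega) (by omega) (by omega) (by omega) (by omega) (by omega) (by omega)
  · have h4 : f (2 * k + 2) ≠ 2 * k + 3 := fun h => by have := hf.apply_eq_of_eq h; omega
    have := hf.apply_eq_of_eq hL
    omega

/-- In 1-based notation with `n = k + 2`: delete the fixed point `2n` of `π ∈ AI_{2n+1}`, or turn
its 2-cycle `(2n 2n+1)` into the fixed point `2n`. -/
def erasePenult (k : ℕ) (f : ℕ → ℕ) (i : ℕ) : ℕ :=
  if i = 2 * k + 3 then f (2 * k + 4)
  else if i = f (2 * k + 4) then 2 * k + 3
  else if 2 * k + 4 ≤ i then i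
  else f i

theorem erasePenult_penult : erasePenult k f (2 * k + 3) = f (2 * k + 4) := if_pos rfl

theorem erasePenult_of_le (hf : IsAI4321 (2 * k + 5) f) {i : ℕ} (hi : 2 * k + 4 ≤ i) :
    erasePenult k f i = i := by
  have := hf.apply_last_lt
  have := hf.lt (i := 2 * k + 3) (by omega)
  rw [erasePenult, if_neg (by omega), if_neg (by omega), if_pos hi]

theorem erasePenult_of_lt (hf : IsAI4321 (2 * k + 5) f) {i : ℕ} (hi : i < 2 * k + 3) :
    (i = f (2 * k + 4) ∧ erasePenult k f i = 2 * k + 3 ∧ f i = 2 * k + 4) ∨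
      (i ≠ f (2 * k + 4) ∧ erasePenult k f i = f i ∧ f i < 2 * k + 3) := by
  by_cases hc : i = f (2 * k + 4)
  · exact .inl ⟨hc, by rw [erasePenult, if_neg (by omega), if_pos hc],
      hf.apply_eq_of_eq hc.symm⟩
  · exact .inr ⟨hc, by rw [erasePenult, if_neg (by omega), if_neg hc, if_neg (by omega)],
      hf.apply_lt_penult hi hc⟩

theorem erasePenult_apply_last (hf : IsAI4321 (2 * k + 5) f) :
    erasePenult k f (f (2 * k + 4)) = 2 * k + 3 := by
  by_cases hc : f (2 * k + 4) = 2 * k + 3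
  · rw [hc, erasePenult_penult, hc]
  · have := hf.apply_last_lt
    have := hf.lt (i := 2 * k + 3) (by omega)
    rcases erasePenult_of_lt hf (i := f (2 * k + 4)) (by omega) with h | h <;> omega

theorem isAI4321_erasePenult (hf : IsAI4321 (2 * k + 5) f) (hE : ¬ EndsWith4231 k f) :
    IsAI4321 (2 * k + 4) (erasePenult k f) := by
  have hc := hf.apply_last_lt
  have hcodd := hf.apply_last_mod_two
  have := hf.lt (i := 2 * k + 3) (by omega)
  refine ⟨fun i => ?_, fun i hi => erasePenult_of_le hf hi, fun i hi hi2 => ?_,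
    fun i hi hi2 => ?_, ?_⟩
  · rcases lt_trichotomy i (2 * k + 3) with hi | rfl | hi
    · rcases erasePenult_of_lt hf hi with ⟨rfl, h, -⟩ | ⟨hic, h, hlt⟩
      · rw [h, erasePenult_penult]
      · have hfic : f i ≠ f (2 * k + 4) := fun h => by have := hf.injective h; omega
        rcases erasePenult_of_lt hf hlt with h' | ⟨-, h', -⟩
        · omega
        · rw [h, h', hf.apply_apply]
    · rw [erasePenult_penult, erasePenult_apply_last hf]
    · rw [erasePenult_of_le hf hi, erasePenult_of_le hf hi]
  · by_cases hL : i = 2 * k + 2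
    · subst hL
      have := hf.apply_antepenult_lt hE
      rw [show 2 * k + 2 + 1 = 2 * k + 3 from rfl, erasePenult_penult]
      rcases erasePenult_of_lt hf (i := 2 * k + 2) (by omega) with h | h <;> omega
    · have := hf.ascent i (by omega) hi2
      rcases erasePenult_of_lt hf (i := i) (by omega) with h | h <;>
        rcases erasePenult_of_lt hf (i := i + 1) (by omega) with h' | h' <;> omega
  · have := hf.descent i (by omega) hi2
    rcases erasePenult_of_lt hf (i := i) (by omega) with h | h <;>
      rcases erasePenult_of_lt hf (i := i + 1) (by omega) with h' | h' <;> omega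
  · -- position `2k+3` of `erasePenult k f` plays the role of position `2k+4` of `f`
    refine hf.avoids.of_inversions (fun i => if i = 2 * k + 3 then 2 * k + 4 else i) ?_
    intro i j hij hj hji
    have hi := erasePenult_of_lt hf (i := i) (by omega)
    simp only [if_neg (show i ≠ 2 * k + 3 by omega)]
    by_cases hjL : j = 2 * k + 3
    · subst hjL
      rw [erasePenult_penult] at hji
      simp only [if_pos]
      omega
    · have := erasePenult_of_lt hf (i := j) (by omega)
      simp only [if_neg hjL]
      omega

theorem IsAI4321.apply_penult_mod_two (hg : IsAI4321 (2 * k + 4) g) : g (2 * k + 3) % 2 = 1 := by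
  by_cases hc : g (2 * k + 3) = 2 * k + 3
  · omega
  · have := hg.lt (i := 2 * k + 3) (by omega)
    exact hg.mod_two_of_apply_eq (by rw [hg.apply_apply]) (by omega)

def insertPenult (k : ℕ) (g : ℕ → ℕ) (i : ℕ) : ℕ :=
  if i = 2 * k + 4 then g (2 * k + 3)
  else if i = g (2 * k + 3) then 2 * k + 4
  else if i = 2 * k + 3 then 2 * k + 3
  else g i

theorem insertPenult_last : insertPenult k g (2 * k + 4) = g (2 * k + 3) := if_pos rfl

theorem insertPenult_of_ne (hg : IsAI4321 (2 * k + 4) g) {i : ℕ} (hL : i ≠ 2 * k + 3) :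
    (i = 2 * k + 4 ∧ insertPenult k g i = g (2 * k + 3)) ∨
      (i = g (2 * k + 3) ∧ insertPenult k g i = 2 * k + 4 ∧ g i = 2 * k + 3) ∨
      (i < 2 * k + 3 ∧ i ≠ g (2 * k + 3) ∧ insertPenult k g i = g i ∧ g i < 2 * k + 3) ∨
      (2 * k + 5 ≤ i ∧ insertPenult k g i = i) := by
  have := hg.lt (i := 2 * k + 3) (by omega)
  by_cases hN : i = 2 * k + 4
  · exact .inl ⟨hN, by rw [hN, insertPenult_last]⟩
  by_cases hc : i = g (2 * k + 3)
  · exact .inr <| .inl ⟨hc, by rw [insertPenult, if_neg hN, if_pos hc],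
      hg.apply_eq_of_eq hc.symm⟩
  have hi : insertPenult k g i = g i := by rw [insertPenult, if_neg hN, if_neg hc, if_neg hL]
  by_cases hlt : i < 2 * k + 3
  · have h1 : g i ≠ 2 * k + 3 := fun h => hc (hg.apply_eq_of_eq h).symm
    have := hg.lt (i := i) (by omega)
    exact .inr <| .inr <| .inl ⟨hlt, hc, hi, by omega⟩
  · exact .inr <| .inr <| .inr ⟨by omega, hi.trans (hg.eq_self_of_le i (by omega))⟩

theorem insertPenult_penult :
    (insertPenult k g (2 * k + 3) = 2 * k + 3 ∧ g (2 * k + 3) ≠ 2 * k + 3) ∨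
      (insertPenult k g (2 * k + 3) = 2 * k + 4 ∧ g (2 * k + 3) = 2 * k + 3) := by
  unfold insertPenult
  split_ifs <;> omega

theorem insertPenult_apply_penult (hg : IsAI4321 (2 * k + 4) g) :
    insertPenult k g (g (2 * k + 3)) = 2 * k + 4 := by
  have := hg.lt (i := 2 * k + 3) (by omega)
  rw [insertPenult, if_neg (by omega), if_pos rfl]

theorem isAI4321_insertPenult (hg : IsAI4321 (2 * k + 4) g) :
    IsAI4321 (2 * k + 5) (insertPenult k g) := by
  have hcodd := hg.apply_penult_mod_two
  have hc := hg.lt (i := 2 * k + 3) (by omega)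
  have hL := insertPenult_penult (k := k) (g := g)
  have hπ := fun i (hi : i ≠ 2 * k + 3) => insertPenult_of_ne hg hi
  refine ⟨fun i => ?_, fun i hi => ?_, fun i hi hi2 => ?_, fun i hi hi2 => ?_, ?_⟩
  · by_cases hiL : i = 2 * k + 3
    · subst hiL
      rcases hL with ⟨h, -⟩ | ⟨h, h'⟩
      · rw [h, h]
      · rw [h, insertPenult_last, h']
    rcases hπ i hiL with ⟨rfl, h⟩ | ⟨rfl, h, -⟩ | ⟨-, hic, h, hgi⟩ | ⟨-, h⟩
    · rw [h, insertPenult_apply_penult hg]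
    · rw [h, insertPenult_last]
    · have : g i ≠ g (2 * k + 3) := fun h' => hiL (hg.injective h')
      rcases hπ (g i) (by omega) with h' | h' | ⟨-, -, h', -⟩ | h'
      · omega
      · omega
      · rw [h, h', hg.apply_apply]
      · omega
    · rw [h, h]
  · rcases hπ i (by omega) with h | h | h | h <;> omega
  · by_cases hi' : i = 2 * k + 2
    · subst hi'
      have := hπ (2 * k + 2) (by omega)
      show insertPenult k g (2 * k + 2) < insertPenult k g (2 * k + 3)
      omega
    · have := hg.ascent i (by omega) hi2
      have := hπ i (by omega)
      have := hπ (i + 1) (by omega)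
      omega
  · by_cases hi' : i = 2 * k + 3
    · subst hi'
      show insertPenult k g (2 * k + 4) < insertPenult k g (2 * k + 3)
      rw [insertPenult_last]
      omega
    · have := hg.descent i (by omega) hi2
      have := hπ i (by omega)
      have := hπ (i + 1) (by omega)
      omega
  · have hlt : ∀ i, i < 2 * k + 5 → insertPenult k g i < 2 * k + 5 := by
      intro i hi
      by_cases hiL : i = 2 * k + 3
      · subst hiL; omega
      · have := hπ i hiL; omega
    -- no `4321` passes through position `2k+3`, whose value is at least `2k+3`
    refine hg.avoids.of_inversions_on (· ≠ 2 * k + 3)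
      (fun i => if i = 2 * k + 4 then 2 * k + 3 else i) ?_ ?_
    · intro a b c d hab hbc hcd hd hba hcb hdc
      have := hlt a (by omega)
      have := hlt b (by omega)
      have := hlt c (by omega)
      refine ⟨?_, ?_, ?_, ?_⟩ <;> rintro rfl <;> omega
    · intro i j hiL hjL hij hj hji
      have := hπ i hiL
      have := hπ j hjL
      simp only [if_neg (show i ≠ 2 * k + 4 by omega)]
      split_ifs <;> omega

def dropTail (k : ℕ) (f : ℕ → ℕ) (i : ℕ) : ℕ :=
  if i < 2 * k + 1 then f i else i

def appendTail (k : ℕ) (t : ℕ → ℕ) (i : ℕ) : ℕ :=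
  if i < 2 * k + 1 then t i
  else if i = 2 * k + 1 then 2 * k + 4
  else if i = 2 * k + 4 then 2 * k + 1
  else i

theorem IsAI4321.apply_of_endsWith4231 (hf : IsAI4321 (2 * k + 5) f) (hE : EndsWith4231 k f) :
    f (2 * k + 1) = 2 * k + 4 ∧ f (2 * k + 3) = 2 * k + 3 := by
  refine ⟨hf.apply_eq_of_eq hE.2, hf.apply_penult.resolve_right fun h => ?_⟩
  have := hf.apply_eq_of_eq h
  have := hE.2
  omega

theorem IsAI4321.lt_of_endsWith4231 (hf : IsAI4321 (2 * k + 5) f) (hE : EndsWith4231 k f)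
    {i : ℕ} (hi : i < 2 * k + 1) : f i < 2 * k + 1 := by
  obtain ⟨h1, h3⟩ := hf.apply_of_endsWith4231 hE
  obtain ⟨h2, h4⟩ := hE
  have := hf.lt (i := i) (by omega)
  have : f i ≠ 2 * k + 1 := fun h => by have := hf.apply_eq_of_eq h; omega
  have : f i ≠ 2 * k + 2 := fun h => by have := hf.apply_eq_of_eq h; omega
  have : f i ≠ 2 * k + 3 := fun h => by have := hf.apply_eq_of_eq h; omega
  have : f i ≠ 2 * k + 4 := fun h => by have := hf.apply_eq_of_eq h; omega
  omega

theorem isAI4321_dropTail (hf : IsAI4321 (2 * k + 5) f) (hE : EndsWith4231 k f) :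
    IsAI4321 (2 * k + 1) (dropTail k f) := by
  have hd : ∀ i, i < 2 * k + 1 → dropTail k f i = f i := fun i hi => if_pos hi
  refine ⟨fun i => ?_, fun i hi => if_neg (not_lt.2 hi), fun i hi hi2 => ?_,
    fun i hi hi2 => ?_, ?_⟩
  · by_cases hi : i < 2 * k + 1
    · rw [hd i hi, hd _ (hf.lt_of_endsWith4231 hE hi), hf.apply_apply]
    · have h : dropTail k f i = i := if_neg hi
      rw [h, h]
  · rw [hd i (by omega), hd (i + 1) hi]
    exact hf.ascent i (by omega) hi2
  · rw [hd i (by omega), hd (i + 1) hi]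
    exact hf.descent i (by omega) hi2
  · refine hf.avoids.of_inversions id fun i j hij hj hji =>
      ⟨hij, (by omega : j < 2 * k + 5), ?_⟩
    rwa [hd i (by omega), hd j hj] at hji

theorem isAI4321_appendTail (ht : IsAI4321 (2 * k + 1) t) :
    IsAI4321 (2 * k + 5) (appendTail k t) := by
  have hh : ∀ i, i < 2 * k + 1 → appendTail k t i = t i := fun i hi => if_pos hi
  have hv : ∀ i, 2 * k + 1 ≤ i → i < 2 * k + 5 → 2 * k + 1 ≤ appendTail k t i ∧
      appendTail k t i < 2 * k + 5 ∧ (i = 2 * k + 2 → appendTail k t i = 2 * k + 2) ∧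
      (i = 2 * k + 3 → appendTail k t i = 2 * k + 3) := by
    intro i hi hi'
    unfold appendTail
    split_ifs <;> omega
  refine ⟨fun i => ?_, fun i hi => ?_, fun i hi hi2 => ?_, fun i hi hi2 => ?_, ?_⟩
  · by_cases hi : i < 2 * k + 1
    · rw [hh i hi, hh _ (ht.lt hi), ht.apply_apply]
    · unfold appendTail; split_ifs <;> omega
  · unfold appendTail; split_ifs <;> omega
  · by_cases hi' : i + 1 < 2 * k + 1
    · rw [hh i (by omega), hh (i + 1) hi']
      exact ht.ascent i hi' hi2
    · have := ht.lt (i := i)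
      unfold appendTail; split_ifs <;> omega
  · by_cases hi' : i + 1 < 2 * k + 1
    · rw [hh i (by omega), hh (i + 1) hi']
      exact ht.descent i hi' hi2
    · have := ht.lt (i := i)
      unfold appendTail; split_ifs <;> omega
  · -- the tail lies above the head and `4231` contains no `4321`
    refine ht.avoids.of_inversions_on (· < 2 * k + 1) id ?_ ?_
    · intro a b c d hab hbc hcd hd hba hcb hdc
      have hpos : ∀ x, x < 2 * k + 1 → appendTail k t x < 2 * k + 1 :=
        fun x hx => (hh x hx).trans_lt (ht.lt hx)
      have := hpos a; have := hpos b; have := hpos c; have := hpos d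
      have := hv a; have := hv b; have := hv c; have := hv d
      omega
    · intro i j hi hj hij _ hji
      rw [hh i hi, hh j hj] at hji
      exact ⟨hij, hj, hji⟩

theorem endsWith4231_appendTail : EndsWith4231 k (appendTail k t) := by
  constructor <;> unfold appendTail <;> split_ifs <;> omega

theorem dropTail_appendTail (ht : IsAI4321 (2 * k + 1) t) : dropTail k (appendTail k t) = t := by
  funext i
  unfold dropTail
  split_ifs with hi
  · exact if_pos hi
  · exact (ht.eq_self_of_le i (not_lt.1 hi)).symm

theorem appendTail_dropTail (hf : IsAI4321 (2 * k + 5) f) (hE : EndsWith4231 k f) :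
    appendTail k (dropTail k f) = f := by
  obtain ⟨hf1, hf3⟩ := hf.apply_of_endsWith4231 hE
  funext i
  unfold appendTail dropTail
  split_ifs with h1 h2 h3
  · rfl
  · rw [h2, hf1]
  · rw [h3, hE.2]
  · by_cases hi : 2 * k + 5 ≤ i
    · exact (hf.eq_self_of_le i hi).symm
    · obtain rfl | rfl : i = 2 * k + 2 ∨ i = 2 * k + 3 := by omega
      · exact hE.1.symm
      · exact hf3.symm

theorem not_endsWith4231_insertPenult (hg : IsAI4321 (2 * k + 4) g) :
    ¬ EndsWith4231 k (insertPenult k g) := by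
  rintro ⟨h2, h4⟩
  have := hg.apply_penult_mod_two
  have : g (2 * k + 2) < g (2 * k + 3) := hg.ascent (2 * k + 2) (by omega) (by omega)
  have := insertPenult_of_ne hg (i := 2 * k + 2) (by omega)
  rw [insertPenult_last] at h4
  omega

theorem erasePenult_insertPenult (hg : IsAI4321 (2 * k + 4) g) :
    erasePenult k (insertPenult k g) = g := by
  funext i
  unfold erasePenult
  rw [insertPenult_last]
  split_ifs with h1 h2 h3
  · rw [h1]
  · rw [h2, hg.apply_apply]
  · exact (hg.eq_self_of_le i h3).symm
  · rcases insertPenult_of_ne hg h1 with h | h | h | h <;> omega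

theorem insertPenult_erasePenult (hf : IsAI4321 (2 * k + 5) f) :
    insertPenult k (erasePenult k f) = f := by
  funext i
  unfold insertPenult
  rw [erasePenult_penult]
  split_ifs with h1 h2 h3
  · rw [h1]
  · rw [h2, hf.apply_apply]
  · subst h3
    exact (hf.apply_penult.resolve_right fun h => h2 (hf.apply_eq_of_eq h).symm).symm
  · by_cases hi : i < 2 * k + 3
    · rcases erasePenult_of_lt hf hi with h | h <;> omega
    · rw [erasePenult_of_le hf (by omega), hf.eq_self_of_le i (by omega)]

def penultEquiv (k : ℕ) :
    {f : {f // IsAI4321 (2 * k + 5) f} // ¬ EndsWith4231 k f.1} ≃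
      {g // IsAI4321 (2 * k + 4) g} where
  toFun f := ⟨erasePenult k f.1.1, isAI4321_erasePenult f.1.2 f.2⟩
  invFun g := ⟨⟨insertPenult k g.1, isAI4321_insertPenult g.2⟩, not_endsWith4231_insertPenult g.2⟩
  left_inv f := Subtype.ext (Subtype.ext (insertPenult_erasePenult f.1.2))
  right_inv g := Subtype.ext (erasePenult_insertPenult g.2)

def tailEquiv (k : ℕ) :
    {f : {f // IsAI4321 (2 * k + 5) f} // EndsWith4231 k f.1} ≃ {t // IsAI4321 (2 * k + 1) t} where
  toFun f := ⟨dropTail k f.1.1, isAI4321_dropTail f.1.2 f.2⟩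
  invFun t := ⟨⟨appendTail k t.1, isAI4321_appendTail t.2⟩, endsWith4231_appendTail⟩
  left_inv f := Subtype.ext (Subtype.ext (appendTail_dropTail f.1.2 f.2))
  right_inv t := Subtype.ext (dropTail_appendTail t.2)

theorem card_AI_two_mul_add_five (k : ℕ) :
    Nat.card (AI (2 * k + 5)) = Nat.card (AI (2 * k + 4)) + Nat.card (AI (2 * k + 1)) := by
  have e : AI (2 * k + 5) ≃ AI (2 * k + 1) ⊕ AI (2 * k + 4) :=
    (modelEquiv _).trans <| (Equiv.sumCompl fun f => EndsWith4231 k f.1).symm.trans <|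
      (Equiv.sumCongr (tailEquiv k) (penultEquiv k)).trans
        (Equiv.sumCongr (modelEquiv _) (modelEquiv _)).symm
  rw [Nat.card_congr e, Nat.card_sum, add_comm]

end AltInv4321

/-- For n ≥ 2, |AI_{2n+1}(4321)| = |AI_{2n}(4321)| + |AI_{2n-3}(4321)|. -/
theorem card_AI_odd_avoiding_4321_rec (n : ℕ) (hn : 2 ≤ n) :
    Nat.card {π : Equiv.Perm (Fin (2 * n + 1)) //
      IsInvolution π ∧ IsAlternating π ∧ Avoids π p4321} =
    Nat.card {π : Equiv.Perm (Fin (2 * n)) //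
      IsInvolution π ∧ IsAlternating π ∧ Avoids π p4321} +
    Nat.card {π : Equiv.Perm (Fin (2 * n - 3)) //
      IsInvolution π ∧ IsAlternating π ∧ Avoids π p4321} := by
  obtain ⟨k, rfl⟩ := Nat.exists_eq_add_of_le' hn
  rw [show 2 * (k + 2) + 1 = 2 * k + 5 by ring, show 2 * (k + 2) = 2 * k + 4 by ring,
    show 2 * k + 4 - 3 = 2 * k + 1 by omega]
  exact AltInv4321.card_AI_two_mul_add_five k
end

section
/- Every alternating involution avoiding the pattern 3412 begins with the value 1; that is, if π ∈ S_n is an involution with π(i) < π(i+1) iff i odd, and π avoids 3412, then π(1) = 1. -/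
/-- Every alternating involution avoiding 3412 begins with the value 1. -/
theorem AI_avoiding_3412_starts_with_one {n : ℕ} (hn : 0 < n)
    (π : Equiv.Perm (Fin n)) (hinv : IsInvolution π) (halt : IsAlternating π)
    (hav : Avoids π p3412) :
    π ⟨0, hn⟩ = ⟨0, hn⟩ := by
  by_contra hne
  set z : Fin n := ⟨0, hn⟩ with hz
  have ha1 : 1 ≤ (π z : ℕ) := by
    rcases Nat.eq_zero_or_pos (π z : ℕ) with h | h
    · exact absurd (Fin.ext h) hne
    · exact h
  have hn2 : 1 < n := lt_of_le_of_lt ha1 (π z).isLt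
  set one : Fin n := ⟨1, hn2⟩ with hone
  have hzo : π z < π one := by
    have := (halt z (by simpa [hz] using hn2)).mpr (by simp [hz, Nat.odd_iff])
    simpa [hz, hone] using this
  have ha2 : 2 ≤ (π z : ℕ) := by
    rcases Nat.lt_or_ge (π z : ℕ) 2 with h | h
    · have h1 : π z = one := Fin.ext (by simp [hone]; omega)
      have h2 : π one = z := by rw [← h1]; exact hinv z
      rw [h1, h2] at hzo
      exact absurd hzo (by simp [Fin.lt_def, hone, hz])
    · exact h
  by_cases hex : ∃ k l : Fin n, 1 < (k : ℕ) ∧ k < l ∧ π k < π l ∧ (π l : ℕ) < (π z : ℕ)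
  · obtain ⟨k, l, hk1, hkl, hπkl, hπla⟩ := hex
    apply hav
    refine ⟨![z, one, k, l], ?_, ?_⟩
    · have h1 : z < one := by rw [Fin.lt_def]; simp [hz, hone]
      have h2 : one < k := by rw [Fin.lt_def]; exact hk1
      intro i j hij
      fin_cases i <;> fin_cases j <;>
        simp only [Matrix.cons_val_zero, Matrix.cons_val_one, Matrix.head_cons,
          Matrix.cons_val_two, Matrix.tail_cons, Matrix.cons_val_three] <;>
        first
          | exact absurd hij (by decide)
          | assumption
          | exact lt_trans h1 h2
          | exact lt_trans h2 hkl
          | exact lt_trans h1 (lt_trans h2 hkl)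
    · have h1 : (π z : ℕ) < (π one : ℕ) := hzo
      have h2 : (π k : ℕ) < (π l : ℕ) := hπkl
      have hp : ∀ a : Fin 4, (p3412 a : ℕ) = ![2,3,0,1] a := by decide
      intro a b
      rw [Fin.lt_def, Fin.lt_def, hp a, hp b]
      fin_cases a <;> fin_cases b <;>
        simp [Matrix.cons_val_zero, Matrix.cons_val_one, Matrix.head_cons] <;> omega
  · push_neg at hex
    have key : ∀ V : Fin n, 1 ≤ (V : ℕ) → (V : ℕ) < (π z : ℕ) →
        2 ≤ (π V : ℕ) ∧ (π V : ℕ) < (π z : ℕ) := by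
      intro V hV1 hVa
      have hVz : V ≠ z := by
        intro h; rw [h] at hV1; simp [hz] at hV1
      have hpV0 : (π V : ℕ) ≠ 0 := by
        intro h
        have : π V = z := Fin.ext (by simp [hz, h])
        have : V = π z := by rw [← this, hinv]
        omega
      have hpV1 : (π V : ℕ) ≠ 1 := by
        intro h
        have : π V = one := Fin.ext (by simp [hone, h])
        have hV : V = π one := by rw [← this, hinv]
        have : (π z : ℕ) < (π one : ℕ) := hzo
        omega
      refine ⟨by omega, ?_⟩
      by_contra hge
      push_neg at hge
      have hlt : π z < π V := by
        rw [Fin.lt_def]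
        rcases Nat.lt_or_ge (π z : ℕ) (π V : ℕ) with h | h
        · exact h
        · exact absurd (Fin.ext (le_antisymm hge h)) (fun hh => hVz (π.injective hh).symm)
      have h1 : π (π z) < π (π V) := by
        rw [hinv, hinv]
        rw [Fin.lt_def]; simp [hz]; omega
      have h3 := hex (π z) (π V) ha2 hlt h1
      rw [hinv] at h3
      omega
    have hpz : (π z : ℕ) < n := (π z).isLt
    set a : ℕ := (π z : ℕ) with hadef
    have hcard := Fintype.card_le_of_injective
      (fun i : Fin (a - 1) =>
        (⟨(π ⟨(i : ℕ) + 1, by have := i.isLt; omega⟩ : ℕ) - 2, by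
          have hk := key ⟨(i : ℕ) + 1, by have := i.isLt; omega⟩
            (by show (1:ℕ) ≤ (i : ℕ) + 1; omega)
            (by show (i : ℕ) + 1 < a; have := i.isLt; omega)
          omega⟩ : Fin (a - 2)))
      (by
        intro i j hij
        have hi := key ⟨(i : ℕ) + 1, by have := i.isLt; omega⟩
          (by show (1:ℕ) ≤ (i : ℕ) + 1; omega)
          (by show (i : ℕ) + 1 < a; have := i.isLt; omega)
        have hj := key ⟨(j : ℕ) + 1, by have := j.isLt; omega⟩
          (by show (1:ℕ) ≤ (j : ℕ) + 1; omega)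
          (by show (j : ℕ) + 1 < a; have := j.isLt; omega)
        simp only [Fin.mk.injEq] at hij
        have heq : π ⟨(i : ℕ) + 1, by have := i.isLt; omega⟩
            = π ⟨(j : ℕ) + 1, by have := j.isLt; omega⟩ := Fin.ext (by omega)
        have h5 : (i : ℕ) + 1 = (j : ℕ) + 1 := congrArg Fin.val (π.injective heq)
        exact Fin.ext (by omega))
    simp only [Fintype.card_fin] at hcard
    omega
end

section
/- For n ≥ 1, the number of reverse alternating involutions of length 2n avoiding both patterns 2431 and 4132 equals 2^{n−1}. -/
/-- In one-line notation (1-based) the block of size `2r` is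
`2r, 2r-2, 2r-1, 2r-4, 2r-3, …, 2, 3, 1`. -/
def block (r t : ℕ) : ℕ :=
  if t = 0 then 2 * r - 1 else if t = 2 * r - 1 then 0
  else if t % 2 = 1 then 2 * r - 2 - t else 2 * r - t

theorem block_lt {r t : ℕ} (ht : t < 2 * r) : block r t < 2 * r := by
  unfold block; split_ifs <;> omega

theorem block_block {r t : ℕ} (ht : t < 2 * r) : block r (block r t) = t := by
  unfold block; split_ifs <;> omega

theorem block_succ_lt_iff {r t : ℕ} (ht : t + 1 < 2 * r) :
    block r (t + 1) < block r t ↔ t % 2 = 0 := by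
  unfold block; split_ifs <;> first | omega | simp_all

theorem block_eq_succ_of_lt {r s t : ℕ} (hst : s < t) (ht : t < 2 * r)
    (h : block r s < block r t) : block r t = block r s + 1 := by
  unfold block at *; split_ifs at * <;> omega

theorem block_zero (r : ℕ) : block r 0 = 2 * r - 1 := if_pos rfl

theorem block_last (r : ℕ) : block r (2 * r - 1) = 0 := by
  unfold block; split_ifs <;> omega

def innerBlock (r t : ℕ) : ℕ := if t % 2 = 0 then 2 * r - 2 - t else 2 * r - t

theorem block_eq_innerBlock {r t : ℕ} (h₁ : 1 ≤ t) (h₂ : t ≤ 2 * r - 2) :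
    block r t = innerBlock (r - 1) (t - 1) + 1 := by
  unfold block innerBlock; split_ifs <;> omega

def stackBlock (f : ℕ → ℕ) (M r j : ℕ) : ℕ :=
  if j < M then f j else if j < M + 2 * r then M + block r (j - M) else j

def blockSum : List ℕ → ℕ → ℕ
  | [] => id
  | r :: rs => stackBlock (blockSum rs) (2 * rs.sum) r

/-- `f` restricted to `[0, N)` is, in 0-based positions, a reverse alternating involution
avoiding 2431 and 4132; outside `[0, N)` it is the identity. -/
structure IsAdmissible (N : ℕ) (f : ℕ → ℕ) : Prop where
  apply_of_le : ∀ j, N ≤ j → f j = j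
  involutive : Function.Involutive f
  descent_iff : ∀ j, j + 1 < N → (f (j + 1) < f j ↔ j % 2 = 0)
  not_2431 : ∀ i j k l, i < j → j < k → k < l → l < N → ¬(f l < f i ∧ f i < f k ∧ f k < f j)
  not_4132 : ∀ i j k l, i < j → j < k → k < l → l < N → ¬(f j < f l ∧ f l < f k ∧ f k < f i)

namespace IsAdmissible

variable {N : ℕ} {f : ℕ → ℕ}

theorem apply_lt (h : IsAdmissible N f) {j : ℕ} (hj : j < N) : f j < N := by
  by_contra hfj
  have := h.involutive j
  rw [h.apply_of_le _ (not_lt.1 hfj)] at this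
  omega

theorem stackBlock {M : ℕ} (h : IsAdmissible M f) (hM : Even M) (r : ℕ) :
    IsAdmissible (M + 2 * r) (_root_.stackBlock f M r) := by
  rw [Nat.even_iff] at hM
  set g := _root_.stackBlock f M r
  have g_low : ∀ j < M, g j = f j := fun j hj => if_pos hj
  have g_mid : ∀ j, M ≤ j → j < M + 2 * r → g j = M + block r (j - M) := fun j h₁ h₂ =>
    (if_neg (not_lt.2 h₁)).trans (if_pos h₂)
  have g_high : ∀ j, M + 2 * r ≤ j → g j = j := fun j hj =>
    (if_neg (by omega)).trans (if_neg (by omega))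
  have le_g : ∀ j, M ≤ j → M ≤ g j := fun j hj => by
    rcases lt_or_ge j (M + 2 * r) with hj' | hj'
    · rw [g_mid j hj hj']; omega
    · rw [g_high j hj']; omega
  refine ⟨fun j hj => g_high j hj, fun j => ?_, fun j hj => ?_, ?_, ?_⟩
  · rcases lt_or_ge j M with h₁ | h₁
    · rw [g_low j h₁, g_low _ (h.apply_lt h₁), h.involutive]
    rcases lt_or_ge j (M + 2 * r) with h₂ | h₂
    · have := block_lt (r := r) (t := j - M) (by omega)
      rw [g_mid j h₁ h₂, g_mid _ (by omega) (by omega), Nat.add_sub_cancel_left,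
        block_block (by omega)]
      omega
    · rw [g_high j h₂, g_high j h₂]
  · rcases lt_or_ge (j + 1) M with h₁ | h₁
    · rw [g_low _ h₁, g_low j (by omega)]; exact h.descent_iff j h₁
    rcases eq_or_lt_of_le h₁ with h₂ | h₂
    · have := h.apply_lt (j := j) (by omega)
      rw [g_low j (by omega), g_mid _ h₁ hj, ← h₂, Nat.sub_self, block_zero]
      omega
    · rw [g_mid _ h₁ hj, g_mid j (by omega) (by omega), Nat.add_lt_add_iff_left,
        show j + 1 - M = j - M + 1 by omega, block_succ_lt_iff (by omega)]
      omega
  -- A pattern reaching into the new block lies inside it, where a non-inversion is a pair of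
  -- consecutive values, which neither 2431 nor 4132 can accommodate.
  · intro i j k l hij hjk hkl hl ⟨h₁, h₂, h₃⟩
    by_cases hlM : l < M
    · simp only [g_low i (by omega), g_low j (by omega), g_low k (by omega), g_low l hlM]
        at h₁ h₂ h₃
      exact h.not_2431 i j k l hij hjk hkl hlM ⟨h₁, h₂, h₃⟩
    have hiM : M ≤ i := not_lt.1 fun hi => by
      have := le_g l (not_lt.1 hlM); have := h.apply_lt hi; rw [g_low i hi] at h₁; omega
    simp only [g_mid i hiM (by omega), g_mid j (by omega) (by omega),
      g_mid k (by omega) (by omega), g_mid l (by omega) hl] at h₁ h₂ h₃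
    have := block_eq_succ_of_lt (r := r) (s := i - M) (t := j - M) (by omega) (by omega) (by omega)
    omega
  · intro i j k l hij hjk hkl hl ⟨h₁, h₂, h₃⟩
    by_cases hlM : l < M
    · simp only [g_low i (by omega), g_low j (by omega), g_low k (by omega), g_low l hlM]
        at h₁ h₂ h₃
      exact h.not_4132 i j k l hij hjk hkl hlM ⟨h₁, h₂, h₃⟩
    have hiM : M ≤ i := not_lt.1 fun hi => by
      have := le_g l (not_lt.1 hlM); have := h.apply_lt hi; rw [g_low i hi] at h₃; omega
    simp only [g_mid i hiM (by omega), g_mid j (by omega) (by omega),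
      g_mid k (by omega) (by omega), g_mid l (by omega) hl] at h₁ h₂ h₃
    have := block_eq_succ_of_lt (r := r) (s := j - M) (t := k - M) (by omega) (by omega) (by omega)
    omega

end IsAdmissible

theorem isAdmissible_blockSum : ∀ rs : List ℕ, IsAdmissible (2 * rs.sum) (blockSum rs)
  | [] => ⟨fun _ _ => rfl, fun _ => rfl, by simp, by simp, by simp⟩
  | r :: rs => by
    rw [List.sum_cons, mul_add, add_comm]
    exact (isAdmissible_blockSum rs).stackBlock (even_two_mul _) r

theorem blockSum_cons_of_lt {r j : ℕ} {rs : List ℕ} (hj : j < 2 * rs.sum) :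
    blockSum (r :: rs) j = blockSum rs j := if_pos hj

theorem blockSum_cons_last {r : ℕ} (rs : List ℕ) (hr : 0 < r) :
    blockSum (r :: rs) (2 * (r :: rs).sum - 1) = 2 * rs.sum := by
  have hj : 2 * (r :: rs).sum - 1 = 2 * rs.sum + (2 * r - 1) := by
    rw [List.sum_cons]; omega
  rw [hj, blockSum, stackBlock, if_neg (by omega), if_pos (by omega), Nat.add_sub_cancel_left,
    block_last, add_zero]

theorem eq_of_blockSum_eq {rs rs' : List ℕ} (hrs : ∀ r ∈ rs, 0 < r) (hrs' : ∀ r ∈ rs', 0 < r)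
    (hsum : rs.sum = rs'.sum) (h : blockSum rs = blockSum rs') : rs = rs' := by
  induction rs generalizing rs' with
  | nil =>
    cases rs' with
    | nil => rfl
    | cons r' rs' => have := hrs' r' List.mem_cons_self; simp at hsum; omega
  | cons r rs ih =>
    cases rs' with
    | nil => have := hrs r List.mem_cons_self; simp at hsum; omega
    | cons r' rs' =>
      have hlast := blockSum_cons_last rs (hrs r List.mem_cons_self)
      rw [h, hsum, blockSum_cons_last rs' (hrs' r' List.mem_cons_self)] at hlast
      have htail : rs.sum = rs'.sum := by omega
      obtain rfl : r = r' := by simp only [List.sum_cons] at hsum; omega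
      have htail_eq : blockSum rs = blockSum rs' := funext fun j => by
        rcases lt_or_ge j (2 * rs.sum) with hj | hj
        · rw [← blockSum_cons_of_lt (r := r) hj, h, blockSum_cons_of_lt (htail ▸ hj)]
        · rw [(isAdmissible_blockSum rs).apply_of_le j hj,
            (isAdmissible_blockSum rs').apply_of_le j (htail ▸ hj)]
      rw [ih (fun x hx => hrs x (List.mem_cons_of_mem _ hx))
        (fun x hx => hrs' x (List.mem_cons_of_mem _ hx)) htail htail_eq]

structure IsAltInvAvoiding132 (r : ℕ) (σ : ℕ → ℕ) : Prop where
  apply_lt : ∀ t < 2 * r, σ t < 2 * r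
  apply_apply : ∀ t < 2 * r, σ (σ t) = t
  descent_iff : ∀ t, t + 1 < 2 * r → (σ (t + 1) < σ t ↔ t % 2 = 1)
  not_132 : ∀ a b c, a < b → b < c → c < 2 * r → ¬(σ a < σ c ∧ σ c < σ b)

namespace IsAltInvAvoiding132

variable {r : ℕ} {σ : ℕ → ℕ}

theorem apply_zero (h : IsAltInvAvoiding132 r σ) (hr : 0 < r) : σ 0 = 2 * r - 2 := by
  have hσσ := h.apply_apply 0 (by omega)
  have hlt := h.apply_lt 0 (by omega)
  have heven : σ 0 % 2 = 0 := by
    by_contra hodd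
    rcases lt_or_ge (σ 0 + 1) (2 * r) with hz | hz
    · have := (h.descent_iff _ hz).2 (by omega)
      omega
    · have hasc := (h.descent_iff (2 * r - 2) (by omega)).not.2 (by omega)
      rw [show 2 * r - 2 + 1 = σ 0 by omega, hσσ] at hasc
      have := h.apply_apply (2 * r - 2) (by omega)
      rw [show σ (2 * r - 2) = 0 by omega] at this
      omega
  by_contra hne
  -- otherwise `σ 0 + 2 < 2r`, and `0, σ (σ 0 + 2), σ (σ 0 + 1)` form a 132
  have hdesc := (h.descent_iff (σ 0 + 1) (by omega)).2 (by omega)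
  have hpos : σ (σ 0 + 2) ≠ 0 := fun h0 => by
    have := h.apply_apply (σ 0 + 2) (by omega)
    rw [h0] at this
    omega
  exact h.not_132 (σ 0) (σ 0 + 1) (σ 0 + 2) (by omega) (by omega) (by omega) ⟨by omega, hdesc⟩

theorem apply_one (h : IsAltInvAvoiding132 r σ) (hr : 0 < r) : σ 1 = 2 * r - 1 := by
  have h₀ := h.apply_zero hr
  have hasc : ¬σ 1 < σ 0 := (h.descent_iff 0 (by omega)).not.2 (by omega)
  have hne : σ 1 ≠ σ 0 := fun heq => by
    have := h.apply_apply 1 (by omega)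
    rw [heq, h.apply_apply 0 (by omega)] at this
    omega
  have := h.apply_lt 1 (by omega)
  omega

theorem mem_interior (h : IsAltInvAvoiding132 r σ) {s : ℕ} (h₁ : 2 ≤ s) (h₂ : s < 2 * r - 2) :
    2 ≤ σ s ∧ σ s < 2 * r - 2 := by
  have h₀ := h.apply_zero (by omega)
  have h₁ := h.apply_one (by omega)
  have h₀' := h.apply_apply 0 (by omega)
  have h₁' := h.apply_apply 1 (by omega)
  have hs := h.apply_apply s (by omega)
  have := h.apply_lt s (by omega)
  rw [h₀] at h₀'
  rw [h₁] at h₁'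
  obtain hv | hv | hv | hv | hv : σ s = 0 ∨ σ s = 1 ∨ σ s = 2 * r - 2 ∨ σ s = 2 * r - 1 ∨
      (2 ≤ σ s ∧ σ s < 2 * r - 2) := by omega
  all_goals first | exact hv | (rw [hv] at hs; omega)

theorem shift (h : IsAltInvAvoiding132 r σ) :
    IsAltInvAvoiding132 (r - 2) (fun s => σ (s + 2) - 2) := by
  refine ⟨fun s hs => ?_, fun s hs => ?_, fun s hs => ?_, fun a b c hab hbc hc => ?_⟩
  · have := h.mem_interior (s := s + 2) (by omega) (by omega)
    omega
  · have := h.mem_interior (s := s + 2) (by omega) (by omega)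
    show σ (σ (s + 2) - 2 + 2) - 2 = s
    rw [Nat.sub_add_cancel this.1, h.apply_apply _ (by omega)]
    omega
  · have := h.mem_interior (s := s + 2) (by omega) (by omega)
    have := h.mem_interior (s := s + 2 + 1) (by omega) (by omega)
    have := h.descent_iff (s + 2) (by omega)
    simp only [show s + 1 + 2 = s + 2 + 1 by omega]
    omega
  · have := h.mem_interior (s := a + 2) (by omega) (by omega)
    have := h.mem_interior (s := b + 2) (by omega) (by omega)
    have := h.mem_interior (s := c + 2) (by omega) (by omega)
    have := h.not_132 (a + 2) (b + 2) (c + 2) (by omega) (by omega) (by omega)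
    omega

theorem eq_innerBlock : ∀ {r : ℕ} {σ : ℕ → ℕ}, IsAltInvAvoiding132 r σ →
    ∀ t < 2 * r, σ t = innerBlock r t := by
  intro r
  induction r using Nat.strong_induction_on with
  | _ r ih =>
    intro σ h t ht
    have h₀ := h.apply_zero (by omega)
    have h₁ := h.apply_one (by omega)
    have h₀' := h.apply_apply 0 (by omega)
    have h₁' := h.apply_apply 1 (by omega)
    rw [h₀] at h₀'
    rw [h₁] at h₁'
    obtain rfl | rfl | rfl | rfl | ⟨ht₁, ht₂⟩ : t = 0 ∨ t = 1 ∨ t = 2 * r - 2 ∨ t = 2 * r - 1 ∨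
        (2 ≤ t ∧ t < 2 * r - 2) := by omega
    case inr.inr.inr.inr =>
      have hshift := ih (r - 2) (by omega) h.shift (t - 2) (by omega)
      have := h.mem_interior ht₁ ht₂
      simp only [show t - 2 + 2 = t by omega] at hshift
      unfold innerBlock at hshift ⊢
      split_ifs at hshift ⊢ <;> omega
    all_goals unfold innerBlock; split_ifs <;> first | omega | contradiction

end IsAltInvAvoiding132

def truncate (f : ℕ → ℕ) (M j : ℕ) : ℕ := if j < M then f j else j

namespace IsAdmissible

variable {N : ℕ} {f : ℕ → ℕ}

theorem truncate (h : IsAdmissible N f) {M : ℕ} (hMN : M ≤ N) (hmaps : ∀ x < M, f x < M) :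
    IsAdmissible M (_root_.truncate f M) := by
  have low : ∀ j < M, _root_.truncate f M j = f j := fun j hj => if_pos hj
  refine ⟨fun j hj => if_neg (by omega), fun j => ?_, fun j hj => ?_,
    fun i j k l hij hjk hkl hl => ?_, fun i j k l hij hjk hkl hl => ?_⟩
  · by_cases hj : j < M
    · rw [low j hj, low _ (hmaps j hj), h.involutive]
    · simp only [_root_.truncate, if_neg hj]
  · rw [low _ hj, low j (by omega)]
    exact h.descent_iff j (by omega)
  · rw [low i (by omega), low j (by omega), low k (by omega), low l hl]
    exact h.not_2431 i j k l hij hjk hkl (by omega)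
  · rw [low i (by omega), low j (by omega), low k (by omega), low l hl]
    exact h.not_4132 i j k l hij hjk hkl (by omega)

theorem apply_pred_lt (h : IsAdmissible N f) (hN : Even N) (hN0 : 0 < N) :
    f (N - 1) < N - 1 := by
  rw [Nat.even_iff] at hN
  have hdesc := (h.descent_iff (N - 2) (by omega)).2 (by omega)
  rw [show N - 2 + 1 = N - 1 by omega] at hdesc
  have := h.apply_lt (j := N - 2) (by omega)
  omega

theorem even_apply_pred (h : IsAdmissible N f) (hN : Even N) (hN0 : 0 < N) :
    Even (f (N - 1)) := by
  have hp := h.apply_pred_lt hN hN0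
  have hfp : f (f (N - 1)) = N - 1 := h.involutive _
  rw [Nat.even_iff]
  by_contra hodd
  have hdesc := (h.descent_iff (f (N - 1) - 1) (by omega)).2 (by omega)
  rw [show f (N - 1) - 1 + 1 = f (N - 1) by omega, hfp] at hdesc
  have := h.apply_lt (j := f (N - 1) - 1) (by omega)
  omega

theorem apply_lt_of_lt (h : IsAdmissible N f) (hN : Even N) (hN0 : 0 < N) {p : ℕ}
    (hp : f (N - 1) = p) {x : ℕ} (hx : x < p) : f x < p := by
  have hpN := hp ▸ h.apply_pred_lt hN hN0
  have hfp : f p = N - 1 := hp ▸ h.involutive (N - 1)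
  by_contra! hfx
  obtain ⟨x₀, hx₀, hmax⟩ := Finset.exists_max_image (Finset.range p) f ⟨x, Finset.mem_range.2 hx⟩
  rw [Finset.mem_range] at hx₀
  set w := f x₀
  have hfw : f w = x₀ := h.involutive x₀
  have hpw : p ≤ w := hfx.trans (hmax x (Finset.mem_range.2 hx))
  have hwN : w < N := h.apply_lt (by omega)
  have hwp : w ≠ p := fun e => by rw [e, hfp] at hfw; omega
  have hw₁ : w ≠ N - 1 := fun e => by rw [e, hp] at hfw; omega
  have hw₂ : w ≠ N - 2 := fun e => by
    have := (h.descent_iff (N - 2) (by omega)).2 (by rw [Nat.even_iff] at hN; omega)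
    rw [show N - 2 + 1 = N - 1 by omega, hp, ← e, hfw] at this
    omega
  -- by maximality of `w`, the value `w + 1` is taken at a position between `p` and `N - 1`
  set k := f (w + 1)
  have hfk : f k = w + 1 := h.involutive (w + 1)
  have hpk : p < k := by
    by_contra! hkp
    rcases hkp.lt_or_eq with hkp | hkp
    · have := hmax k (Finset.mem_range.2 hkp)
      omega
    · rw [hkp, hfp] at hfk
      omega
  have hkN : k < N - 1 := by
    have : k < N := h.apply_lt (by omega)
    by_contra! hk
    rw [show k = N - 1 by omega, hp] at hfk
    omega
  exact h.not_2431 x₀ p k (N - 1) (by omega) hpk hkN (by omega) ⟨by omega, by omega, by omega⟩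

theorem apply_mem_Ioo (h : IsAdmissible N f) (hN : Even N) (hN0 : 0 < N) {p : ℕ}
    (hp : f (N - 1) = p) {x : ℕ} (hx₁ : p < x) (hx₂ : x < N - 1) :
    p < f x ∧ f x < N - 1 := by
  have hfp : f p = N - 1 := hp ▸ h.involutive (N - 1)
  have hfx := h.involutive x
  have hxN := h.apply_lt (j := x) (by omega)
  have hpx : p ≤ f x := not_lt.1 fun hlt => by
    have := h.apply_lt_of_lt hN hN0 hp hlt
    omega
  refine ⟨lt_of_le_of_ne hpx fun e => ?_, lt_of_le_of_ne (by omega) fun e => ?_⟩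
  · rw [← e, hfp] at hfx; omega
  · rw [e, hp] at hfx; omega

theorem isAltInvAvoiding132_inner (h : IsAdmissible N f) (hN : Even N) (hN0 : 0 < N) {p r : ℕ}
    (hp : f (N - 1) = p) (hr : p + 2 * r + 2 = N) :
    IsAltInvAvoiding132 r (fun s => f (p + 1 + s) - (p + 1)) := by
  have hpe := Nat.even_iff.1 (hp ▸ h.even_apply_pred hN hN0)
  have hfp : f p = N - 1 := hp ▸ h.involutive (N - 1)
  have mem : ∀ s < 2 * r, p < f (p + 1 + s) ∧ f (p + 1 + s) < N - 1 := fun s hs =>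
    h.apply_mem_Ioo hN hN0 hp (by omega) (by omega)
  refine ⟨fun s hs => ?_, fun s hs => ?_, fun s hs => ?_, fun a b c hab hbc hc => ?_⟩
  · have := mem s hs
    omega
  · have := mem s hs
    show f (p + 1 + (f (p + 1 + s) - (p + 1))) - (p + 1) = s
    rw [show p + 1 + (f (p + 1 + s) - (p + 1)) = f (p + 1 + s) by omega, h.involutive]
    omega
  · have := mem s (by omega)
    have := mem (s + 1) hs
    have hdesc := h.descent_iff (p + 1 + s) (by omega)
    rw [show p + 1 + s + 1 = p + 1 + (s + 1) by omega] at hdesc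
    show f (p + 1 + (s + 1)) - (p + 1) < f (p + 1 + s) - (p + 1) ↔ s % 2 = 1
    omega
  · have := mem a (by omega)
    have := mem b (by omega)
    have := mem c hc
    have := h.not_4132 p (p + 1 + a) (p + 1 + b) (p + 1 + c) (by omega) (by omega) (by omega)
      (by omega)
    omega

theorem apply_add_eq_block (h : IsAdmissible N f) (hN : Even N) (hN0 : 0 < N) {p r : ℕ}
    (hp : f (N - 1) = p) (hr : p + 2 * r = N) {t : ℕ} (ht : t < 2 * r) :
    f (p + t) = p + block r t := by
  have hfp : f p = N - 1 := hp ▸ h.involutive (N - 1)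
  have hpN := h.apply_pred_lt hN hN0
  obtain rfl | rfl | ⟨ht₁, ht₂⟩ : t = 0 ∨ t = 2 * r - 1 ∨ (1 ≤ t ∧ t ≤ 2 * r - 2) := by omega
  · rw [add_zero, hfp, block_zero]
    omega
  · rw [show p + (2 * r - 1) = N - 1 by omega, hp, block_last, add_zero]
  · have hinner := (h.isAltInvAvoiding132_inner hN hN0 hp (r := r - 1) (by omega)).eq_innerBlock
      (t - 1) (by omega)
    have := h.apply_mem_Ioo hN hN0 hp (x := p + t) (by omega) (by omega)
    simp only [show p + 1 + (t - 1) = p + t by omega] at hinner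
    rw [block_eq_innerBlock ht₁ ht₂]
    omega

theorem exists_blockSum_eq : ∀ {N : ℕ} {f : ℕ → ℕ}, IsAdmissible N f → Even N →
    ∃ rs : List ℕ, (∀ r ∈ rs, 0 < r) ∧ 2 * rs.sum = N ∧ blockSum rs = f := by
  intro N
  induction N using Nat.strong_induction_on with
  | _ N ih =>
    intro f h hN
    rcases N.eq_zero_or_pos with rfl | hN0
    · exact ⟨[], by simp, rfl, funext fun j => (h.apply_of_le j (Nat.zero_le j)).symm⟩
    set p := f (N - 1) with hp
    have hpN := h.apply_pred_lt hN hN0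
    have hpe := h.even_apply_pred hN hN0
    obtain ⟨r, hr⟩ : ∃ r, p + 2 * r = N := ⟨(N - p) / 2, by rw [Nat.even_iff] at hN hpe; omega⟩
    obtain ⟨rs, hrs, hsum, hrs_eq⟩ :=
      ih p (by omega) (h.truncate (by omega) fun x hx => h.apply_lt_of_lt hN hN0 hp.symm hx) hpe
    refine ⟨r :: rs, List.forall_mem_cons.2 ⟨by omega, hrs⟩, by simp only [List.sum_cons]; omega,
      funext fun j => ?_⟩
    rw [blockSum, hsum, hrs_eq, _root_.stackBlock]
    split_ifs with hj₁ hj₂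
    · exact if_pos hj₁
    · rw [← h.apply_add_eq_block hN hN0 hp.symm hr (t := j - p) (by omega),
        Nat.add_sub_cancel' (by omega)]
    · exact (h.apply_of_le j (by omega)).symm

end IsAdmissible

theorem contains_iff_strictMono {n k : ℕ} (σ : Equiv.Perm (Fin n)) (τ : Equiv.Perm (Fin k)) :
    Contains σ τ ↔ ∃ f : Fin k → Fin n, StrictMono f ∧ StrictMono (σ ∘ f ∘ τ.symm) := by
  refine exists_congr fun f => and_congr_right fun _ => ⟨fun h x y hxy => ?_, fun h a b => ?_⟩
  · simpa using (h (τ.symm x) (τ.symm y)).2 (by simpa using hxy)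
  · simpa using h.lt_iff_lt (a := τ a) (b := τ b)

theorem contains_p2431_iff {n : ℕ} (σ : Equiv.Perm (Fin n)) :
    Contains σ p2431 ↔ ∃ i j k l, i < j ∧ j < k ∧ k < l ∧ σ l < σ i ∧ σ i < σ k ∧ σ k < σ j := by
  rw [contains_iff_strictMono]
  constructor
  · rintro ⟨f, hf, hσf⟩
    exact ⟨f 0, f 1, f 2, f 3, hf (by decide), hf (by decide), hf (by decide),
      hσf (show (0 : Fin 4) < 1 by decide), hσf (show (1 : Fin 4) < 2 by decide),
      hσf (show (2 : Fin 4) < 3 by decide)⟩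
  · rintro ⟨i, j, k, l, hij, hjk, hkl, h₁, h₂, h₃⟩
    refine ⟨![i, j, k, l], ?_, ?_⟩ <;>
      simp [Fin.strictMono_iff_lt_succ, Fin.forall_fin_succ, p2431, *]

theorem contains_p4132_iff {n : ℕ} (σ : Equiv.Perm (Fin n)) :
    Contains σ p4132 ↔ ∃ i j k l, i < j ∧ j < k ∧ k < l ∧ σ j < σ l ∧ σ l < σ k ∧ σ k < σ i := by
  rw [contains_iff_strictMono]
  constructor
  · rintro ⟨f, hf, hσf⟩
    exact ⟨f 0, f 1, f 2, f 3, hf (by decide), hf (by decide), hf (by decide),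
      hσf (show (0 : Fin 4) < 1 by decide), hσf (show (1 : Fin 4) < 2 by decide),
      hσf (show (2 : Fin 4) < 3 by decide)⟩
  · rintro ⟨i, j, k, l, hij, hjk, hkl, h₁, h₂, h₃⟩
    refine ⟨![i, j, k, l], ?_, ?_⟩ <;>
      simp [Fin.strictMono_iff_lt_succ, Fin.forall_fin_succ, p4132, *]

def extendById {N : ℕ} (π : Equiv.Perm (Fin N)) (j : ℕ) : ℕ :=
  if h : j < N then π ⟨j, h⟩ else j

section extendById

variable {N : ℕ}

theorem extendById_of_lt (π : Equiv.Perm (Fin N)) {j : ℕ} (hj : j < N) :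
    extendById π j = π ⟨j, hj⟩ := dif_pos hj

theorem extendById_val (π : Equiv.Perm (Fin N)) (x : Fin N) : extendById π x = π x :=
  dif_pos x.2

theorem extendById_injective : Function.Injective (extendById (N := N)) := fun π π' h =>
  Equiv.ext fun x => Fin.ext <| by rw [← extendById_val, ← extendById_val, h]

theorem isAdmissible_extendById_iff (π : Equiv.Perm (Fin N)) :
    IsAdmissible N (extendById π) ↔
      IsInvolution π ∧ IsRevAlternating π ∧ Avoids π p2431 ∧ Avoids π p4132 := by
  constructor
  · intro h
    refine ⟨fun i => Fin.ext ?_, fun i hi => ?_, ?_, ?_⟩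
    · simpa only [extendById_val] using h.involutive i
    · have := h.descent_iff i hi
      rw [extendById_of_lt π hi, extendById_val] at this
      rw [Fin.lt_def, Nat.odd_iff, this]
      omega
    · intro hc
      obtain ⟨i, j, k, l, hij, hjk, hkl, hc⟩ := (contains_p2431_iff π).1 hc
      have := h.not_2431 i j k l hij hjk hkl l.2
      simp only [extendById_val] at this
      exact this hc
    · intro hc
      obtain ⟨i, j, k, l, hij, hjk, hkl, hc⟩ := (contains_p4132_iff π).1 hc
      have := h.not_4132 i j k l hij hjk hkl l.2
      simp only [extendById_val] at this
      exact this hc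
  · rintro ⟨hinv, halt, h2431, h4132⟩
    refine ⟨fun j hj => dif_neg (by omega), fun j => ?_, fun j hj => ?_,
      fun i j k l hij hjk hkl hl hc => ?_, fun i j k l hij hjk hkl hl hc => ?_⟩
    · by_cases hj : j < N
      · rw [extendById_of_lt π hj, extendById_val, hinv]
      · simp only [extendById, dif_neg hj]
    · have := halt ⟨j, by omega⟩ hj
      simp only [Fin.lt_def, Nat.odd_iff] at this
      rw [extendById_of_lt π hj, extendById_of_lt π (by omega), this]
      omega
    · simp only [extendById_of_lt π (show i < N by omega), extendById_of_lt π (show j < N by omega),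
        extendById_of_lt π (show k < N by omega), extendById_of_lt π hl] at hc
      exact h2431 ((contains_p2431_iff π).2 ⟨_, _, _, _, hij, hjk, hkl, hc⟩)
    · simp only [extendById_of_lt π (show i < N by omega), extendById_of_lt π (show j < N by omega),
        extendById_of_lt π (show k < N by omega), extendById_of_lt π hl] at hc
      exact h4132 ((contains_p4132_iff π).2 ⟨_, _, _, _, hij, hjk, hkl, hc⟩)

theorem IsAdmissible.exists_extendById_eq {f : ℕ → ℕ} (h : IsAdmissible N f) :
    ∃ π : Equiv.Perm (Fin N), extendById π = f := by
  refine ⟨Function.Involutive.toPerm (fun x => ⟨f x, h.apply_lt x.2⟩)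
    fun x => Fin.ext (h.involutive x), funext fun j => ?_⟩
  by_cases hj : j < N
  · rw [extendById_of_lt _ hj]
    rfl
  · rw [extendById, dif_neg hj, h.apply_of_le j (not_lt.1 hj)]

theorem card_perm_eq_card_isAdmissible (N : ℕ) :
    Nat.card {π : Equiv.Perm (Fin N) //
      IsInvolution π ∧ IsRevAlternating π ∧ Avoids π p2431 ∧ Avoids π p4132} =
    Nat.card {f : ℕ → ℕ // IsAdmissible N f} := by
  refine Nat.card_eq_of_bijective
    (fun π => ⟨extendById π.1, (isAdmissible_extendById_iff π.1).2 π.2⟩)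
    ⟨fun π π' h => Subtype.ext (extendById_injective (congrArg Subtype.val h)), ?_⟩
  rintro ⟨f, hf⟩
  obtain ⟨π, rfl⟩ := hf.exists_extendById_eq
  exact ⟨⟨π, (isAdmissible_extendById_iff π).1 hf⟩, rfl⟩

end extendById

theorem card_composition_eq_card_isAdmissible (n : ℕ) :
    Nat.card (Composition n) = Nat.card {f : ℕ → ℕ // IsAdmissible (2 * n) f} := by
  refine Nat.card_eq_of_bijective
    (fun c => ⟨blockSum c.blocks, by
      simpa only [c.blocks_sum] using isAdmissible_blockSum c.blocks⟩)
    ⟨fun c c' h => Composition.ext (eq_of_blockSum_eq (fun _ => c.blocks_pos)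
      (fun _ => c'.blocks_pos) (c.blocks_sum.trans c'.blocks_sum.symm) (congrArg Subtype.val h)),
      ?_⟩
  rintro ⟨f, hf⟩
  obtain ⟨rs, hrs, hsum, rfl⟩ := hf.exists_blockSum_eq (even_two_mul n)
  exact ⟨⟨rs, hrs _, by omega⟩, rfl⟩

theorem card_RAI_even_avoiding_2431_4132_general (n : ℕ) :
    Nat.card {π : Equiv.Perm (Fin (2 * n)) //
      IsInvolution π ∧ IsRevAlternating π ∧ Avoids π p2431 ∧ Avoids π p4132} =
    2 ^ (n - 1) := by
  rw [card_perm_eq_card_isAdmissible, ← card_composition_eq_card_isAdmissible,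
    Nat.card_eq_fintype_card, composition_card]

/-- For n ≥ 1, the number of reverse alternating involutions of length 2n
avoiding both 2431 and 4132 is 2^{n-1}. -/
theorem card_RAI_even_avoiding_2431_4132 (n : ℕ) (hn : 1 ≤ n) :
    Nat.card {π : Equiv.Perm (Fin (2 * n)) //
      IsInvolution π ∧ IsRevAlternating π ∧ Avoids π p2431 ∧ Avoids π p4132} =
    2 ^ (n - 1) :=
  card_RAI_even_avoiding_2431_4132_general n
end
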